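/- arXiv:2503.21320 — 4 statements merged into one kernel-verified Lean document; each statement's English description precedes it below -/
import Mathlib

section
/- For all 0 < p < 1, C_{{1,2}}(p) < 1.2183 + 1.6066 · p/(1−p). -/
open Real
open scoped Classical

/-- `h_J(s,p) = ((1-p)^s/p²) Σ_{k ∈ ℤ⁺ \ J} (k²/(k+s)²) C(k+s,k) p^k`. -/
noncomputable def hJfun (J : Set ℕ) (s : ℕ) (p : ℝ) : ℝ :=
  ((1-p)^s / p^2) * ∑' k : ℕ,
    if 1 ≤ k ∧ k ∉ J then ((k:ℝ)^2 / ((k:ℝ) + s)^2) * (Nat.choose (k+s) k : ℝ) * p^k else 0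

/-- `C_J(p) = sup_{s ∈ ℤ⁺} h_J(s,p)`. -/
noncomputable def CJ (J : Set ℕ) (p : ℝ) : ℝ := ⨆ s : ℕ+, hJfun J s p

private lemma pow4_le_exp_neg {y : ℝ} (h0 : 0 ≤ y) (h4 : y ≤ 4) :
    (1 - y/4)^4 ≤ Real.exp (-y) := by
  have h1 : 1 - y/4 ≤ Real.exp (-(y/4)) := by
    have := Real.add_one_le_exp (-(y/4)); linarith
  have h2 : (1 - y/4)^4 ≤ Real.exp (-(y/4))^4 :=
    pow_le_pow_left₀ (by linarith) h1 4
  have h3 : Real.exp (-(y/4))^4 = Real.exp (-y) := by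
    rw [← Real.exp_nat_mul]; congr 1; push_cast; ring
  linarith [h2, h3.le]

private lemma exp_lb (k : ℕ) (L : ℝ) (hL : 0 ≤ L)
    (h : L * (1.01574774:ℝ)^k ≤ 1) : L ≤ Real.exp (-((k:ℝ)/64)) := by
  have hr : Real.exp (1/64) ≤ 1.01574774 := by
    have h1 : Real.exp ((1:ℝ)/64) ^ (64:ℕ) = Real.exp 1 := by
      rw [← Real.exp_nat_mul]; norm_num
    refine le_of_pow_le_pow_left₀ (n := 64) (by norm_num) (by norm_num) ?_
    rw [h1]
    nlinarith [Real.exp_one_lt_d9]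
  have h2 : Real.exp ((k:ℝ)/64) ≤ (1.01574774:ℝ)^k := by
    have he : Real.exp ((k:ℝ)/64) = Real.exp (1/64) ^ k := by
      rw [← Real.exp_nat_mul]; congr 1; push_cast; ring
    rw [he]
    exact pow_le_pow_left₀ (Real.exp_pos _).le hr k
  have h3 : L * Real.exp ((k:ℝ)/64) ≤ 1 :=
    le_trans (mul_le_mul_of_nonneg_left h2 hL) h
  rw [Real.exp_neg, ← one_div, le_div_iff₀ (Real.exp_pos _)]
  exact h3

private lemma seg {L m u v : ℝ} (hL : 0 ≤ L) (hLexp : L ≤ Real.exp (-m))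
    (hu0 : 0 ≤ u) (huv : u < v) (hv : v ≤ 1 + m)
    (hQu : 1 ≤ L*(1+m-u)*(1+2*u) + 0.21825*u)
    (hQv : 1 ≤ L*(1+m-v)*(1+2*v) + 0.21825*v) :
    ∀ y : ℝ, u ≤ y → y ≤ v → 1 ≤ 0.21825*y + Real.exp (-y) * (1+2*y) := by
  intro y hu' hv'
  have h0 : Real.exp (-m) * (1 + (m - y)) ≤ Real.exp (-y) := by
    have h := Real.add_one_le_exp (m - y)
    have h' := mul_le_mul_of_nonneg_left h (Real.exp_pos (-m)).le
    have he : Real.exp (-m) * Real.exp (m - y) = Real.exp (-y) := by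
      rw [← Real.exp_add]; ring_nf
    nlinarith [h', he]
  have hmy : 0 ≤ 1 + m - y := by linarith
  have h1 : L * (1+m-y) ≤ Real.exp (-y) := by
    have := mul_le_mul_of_nonneg_right hLexp hmy
    nlinarith [h0]
  have h2 : L*(1+m-y)*(1+2*y) ≤ Real.exp (-y)*(1+2*y) :=
    mul_le_mul_of_nonneg_right h1 (by linarith)
  have hQy : 1 ≤ L*(1+m-y)*(1+2*y) + 0.21825*y := by
    nlinarith [mul_nonneg (sub_nonneg.2 hv') (sub_nonneg.2 hQu),
      mul_nonneg (sub_nonneg.2 hu') (sub_nonneg.2 hQv),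
      mul_nonneg hL (mul_nonneg (sub_nonneg.2 hu') (sub_nonneg.2 hv')), huv]
  linarith [h2, hQy]

private lemma L1small : ∀ y : ℝ, 0 ≤ y → y ≤ 13/10 →
    1 ≤ 0.21825*y + Real.exp (-y) * (1+2*y) := by
  intro y h0 h13
  have hp := pow4_le_exp_neg h0 (by linarith)
  have h2 : (1 - y/4)^4 * (1+2*y) ≤ Real.exp (-y) * (1+2*y) :=
    mul_le_mul_of_nonneg_right hp (by linarith)
  nlinarith [h2, sq_nonneg (y - 13/10), sq_nonneg y, mul_nonneg h0 (sub_nonneg.2 h13),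
    mul_nonneg (mul_nonneg h0 h0) (sub_nonneg.2 h13),
    mul_nonneg (mul_nonneg (mul_nonneg h0 h0) h0) (sub_nonneg.2 h13)]

private lemma L1 : ∀ y : ℝ, 0 < y → 1 ≤ 0.21825*y + Real.exp (-y) * (1+2*y) := by
  intro y hy
  rcases le_or_gt y (13/10) with h | h
  · exact L1small y hy.le h
  rcases le_or_gt y (9/5) with h2 | h2
  · exact seg (L := (2129116343191/10000000000000 : ℝ)) (m := (99:ℝ)/64) (by norm_num)
      (exp_lb 99 _ (by norm_num) (by norm_num)) (by norm_num) (by norm_num) (by norm_num)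
      (by norm_num) (by norm_num) y h.le h2
  clear h; have h := h2; clear h2
  rcases le_or_gt y (23/10) with h2 | h2
  · exact seg (L := (322843265561/2500000000000 : ℝ)) (m := (131:ℝ)/64) (by norm_num)
      (exp_lb 131 _ (by norm_num) (by norm_num)) (by norm_num) (by norm_num) (by norm_num)
      (by norm_num) (by norm_num) y h.le h2
  clear h; have h := h2; clear h2
  rcases le_or_gt y (51/20) with h2 | h2
  · exact seg (L := (177509240367/2000000000000 : ℝ)) (m := (155:ℝ)/64) (by norm_num)
      (exp_lb 155 _ (by norm_num) (by norm_num)) (by norm_num) (by norm_num) (by norm_num)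
      (by norm_num) (by norm_num) y h.le h2
  clear h; have h := h2; clear h2
  rcases le_or_gt y (14/5) with h2 | h2
  · exact seg (L := (69122133497/1000000000000 : ℝ)) (m := (171:ℝ)/64) (by norm_num)
      (exp_lb 171 _ (by norm_num) (by norm_num)) (by norm_num) (by norm_num) (by norm_num)
      (by norm_num) (by norm_num) y h.le h2
  clear h; have h := h2; clear h2
  rcases le_or_gt y (117/40) with h2 | h2
  · exact seg (L := (573042401133/10000000000000 : ℝ)) (m := (183:ℝ)/64) (by norm_num)
      (exp_lb 183 _ (by norm_num) (by norm_num)) (by norm_num) (by norm_num) (by norm_num)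
      (by norm_num) (by norm_num) y h.le h2
  clear h; have h := h2; clear h2
  rcases le_or_gt y (61/20) with h2 | h2
  · exact seg (L := (126427004733/2500000000000 : ℝ)) (m := (191:ℝ)/64) (by norm_num)
      (exp_lb 191 _ (by norm_num) (by norm_num)) (by norm_num) (by norm_num) (by norm_num)
      (by norm_num) (by norm_num) y h.le h2
  clear h; have h := h2; clear h2
  rcases le_or_gt y (249/80) with h2 | h2
  · exact seg (L := (46045230563/1000000000000 : ℝ)) (m := (197:ℝ)/64) (by norm_num)
      (exp_lb 197 _ (by norm_num) (by norm_num)) (by norm_num) (by norm_num) (by norm_num)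
      (by norm_num) (by norm_num) y h.le h2
  clear h; have h := h2; clear h2
  rcases le_or_gt y (503/160) with h2 | h2
  · exact seg (L := (439366618629/10000000000000 : ℝ)) (m := (200:ℝ)/64) (by norm_num)
      (exp_lb 200 _ (by norm_num) (by norm_num)) (by norm_num) (by norm_num) (by norm_num)
      (by norm_num) (by norm_num) y h.le h2
  clear h; have h := h2; clear h2
  rcases le_or_gt y (127/40) with h2 | h2
  · exact seg (L := (85169740511/2000000000000 : ℝ)) (m := (202:ℝ)/64) (by norm_num)
      (exp_lb 202 _ (by norm_num) (by norm_num)) (by norm_num) (by norm_num) (by norm_num)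
      (by norm_num) (by norm_num) y h.le h2
  clear h; have h := h2; clear h2
  rcases le_or_gt y (1021/320) with h2 | h2
  · exact seg (L := (82549337969/2000000000000 : ℝ)) (m := (204:ℝ)/64) (by norm_num)
      (exp_lb 204 _ (by norm_num) (by norm_num)) (by norm_num) (by norm_num) (by norm_num)
      (by norm_num) (by norm_num) y h.le h2
  clear h; have h := h2; clear h2
  rcases le_or_gt y (513/160) with h2 | h2
  · exact seg (L := (406347632971/10000000000000 : ℝ)) (m := (205:ℝ)/64) (by norm_num)
      (exp_lb 205 _ (by norm_num) (by norm_num)) (by norm_num) (by norm_num) (by norm_num)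
      (by norm_num) (by norm_num) y h.le h2
  clear h; have h := h2; clear h2
  rcases le_or_gt y (259/80) with h2 | h2
  · exact seg (L := (200023892237/5000000000000 : ℝ)) (m := (206:ℝ)/64) (by norm_num)
      (exp_lb 206 _ (by norm_num) (by norm_num)) (by norm_num) (by norm_num) (by norm_num)
      (by norm_num) (by norm_num) y h.le h2
  clear h; have h := h2; clear h2
  rcases le_or_gt y (523/160) with h2 | h2
  · exact seg (L := (96934896027/2500000000000 : ℝ)) (m := (208:ℝ)/64) (by norm_num)
      (exp_lb 208 _ (by norm_num) (by norm_num)) (by norm_num) (by norm_num) (by norm_num)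
      (by norm_num) (by norm_num) y h.le h2
  clear h; have h := h2; clear h2
  rcases le_or_gt y (533/160) with h2 | h2
  · exact seg (L := (369983661489/10000000000000 : ℝ)) (m := (211:ℝ)/64) (by norm_num)
      (exp_lb 211 _ (by norm_num) (by norm_num)) (by norm_num) (by norm_num) (by norm_num)
      (by norm_num) (by norm_num) y h.le h2
  clear h; have h := h2; clear h2
  rcases le_or_gt y (553/160) with h2 | h2
  · exact seg (L := (168436947409/5000000000000 : ℝ)) (m := (217:ℝ)/64) (by norm_num)
      (exp_lb 217 _ (by norm_num) (by norm_num)) (by norm_num) (by norm_num) (by norm_num)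
      (by norm_num) (by norm_num) y h.le h2
  clear h; have h := h2; clear h2
  rcases le_or_gt y (593/160) with h2 | h2
  · exact seg (L := (139639082157/5000000000000 : ℝ)) (m := (229:ℝ)/64) (by norm_num)
      (exp_lb 229 _ (by norm_num) (by norm_num)) (by norm_num) (by norm_num) (by norm_num)
      (by norm_num) (by norm_num) y h.le h2
  clear h; have h := h2; clear h2
  rcases le_or_gt y (673/160) with h2 | h2
  · exact seg (L := (95972372833/5000000000000 : ℝ)) (m := (253:ℝ)/64) (by norm_num)
      (exp_lb 253 _ (by norm_num) (by norm_num)) (by norm_num) (by norm_num) (by norm_num)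
      (by norm_num) (by norm_num) y h.le h2
  clear h; have h := h2; clear h2
  rcases le_or_gt y (23/5) with h2 | h2
  · exact seg (L := (122007394159/10000000000000 : ℝ)) (m := (282:ℝ)/64) (by norm_num)
      (exp_lb 282 _ (by norm_num) (by rw [show (282:ℕ) = 141*2 from rfl, pow_mul]; norm_num)) (by norm_num) (by norm_num) (by norm_num)
      (by norm_num) (by norm_num) y h.le h2
  clear h; have h := h2; clear h2
  -- y > 23/5 : trivial
  nlinarith [Real.exp_pos (-y), mul_pos (Real.exp_pos (-y)) (by linarith : (0:ℝ) < 1+2*y)]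

private lemma term_bound (p : ℝ) (hp : 0 < p) (m j : ℕ) :
    ((j+3:ℕ):ℝ)^2 / (((j+3:ℕ):ℝ) + ((m+1:ℕ):ℝ))^2 * (((j+3)+(m+1)).choose (j+3) : ℝ) * p^(j+3)
      ≤ p^2 * ((((j+1)+(m+1)).choose (m+1) : ℝ) * p^(j+1))
        + (p * ((((j+2)+m).choose m : ℝ) * p^(j+2)))/((m:ℝ)+1) := by
  set t : ℝ := (j:ℝ) with ht
  have hA : (0:ℝ) ≤ ((j+m+2).choose (j+1) : ℝ) := Nat.cast_nonneg _
  have id1n : (j+m+4).choose (j+3) * (j+3) * (j+2)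
      = (j+m+2).choose (j+1) * (j+m+4) * (j+m+3) := by
    have h1 := Nat.add_one_mul_choose_eq (j+m+2) (j+1)
    have h2 := Nat.add_one_mul_choose_eq (j+m+3) (j+2)
    have e1 : j+m+2+1 = j+m+3 := by omega
    have e2 : j+m+3+1 = j+m+4 := by omega
    have e3 : j+1+1 = j+2 := by omega
    have e4 : j+2+1 = j+3 := by omega
    rw [e1, e3] at h1
    rw [e2, e4] at h2
    nlinarith [h1, h2]
  have id1 : (((j+m+4).choose (j+3) : ℝ)) * (t+3) * (t+2)
      = (((j+m+2).choose (j+1) : ℝ)) * (t+(m:ℝ)+4) * (t+(m:ℝ)+3) := by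
    have h := congrArg (Nat.cast : ℕ → ℝ) id1n
    push_cast at h
    rw [ht]; linarith [h]
  have id2 : (((j+m+2).choose (j+2) : ℝ)) * (t+2) = (((j+m+2).choose (j+1) : ℝ)) * ((m:ℝ)+1) := by
    have h := Nat.choose_succ_right_eq (j+m+2) (j+1)
    rw [show j+1+1 = j+2 by omega, show j+m+2-(j+1) = m+1 by omega] at h
    have := congrArg (Nat.cast : ℕ → ℝ) h
    push_cast at this
    rw [ht]; linarith [this]
  have sym1 : ((j+1)+(m+1)).choose (m+1) = (j+m+2).choose (j+1) := by
    have h := Nat.choose_symm (show j+1 ≤ j+m+2 by omega)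
    rw [show j+m+2-(j+1) = m+1 by omega] at h
    rw [show (j+1)+(m+1) = j+m+2 by omega]
    exact h
  have sym2 : ((j+2)+m).choose m = (j+m+2).choose (j+2) := by
    have h := Nat.choose_symm (show j+2 ≤ j+m+2 by omega)
    rw [show j+m+2-(j+2) = m by omega] at h
    rw [show (j+2)+m = j+m+2 by omega]
    exact h
  have sym0 : ((j+3)+(m+1)).choose (j+3) = (j+m+4).choose (j+3) := by congr 1; omega
  rw [sym0, sym1, sym2]
  set A : ℝ := ((j+m+2).choose (j+1) : ℝ)
  set B : ℝ := ((j+m+4).choose (j+3) : ℝ)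
  have ht0 : (0:ℝ) ≤ t := by rw [ht]; positivity
  have hp3 : (0:ℝ) < p^(j+3) := pow_pos hp _
  have h2pos : (0:ℝ) < t+2 := by linarith
  have coeff : ((j+3:ℕ):ℝ)^2 / (((j+3:ℕ):ℝ) + ((m+1:ℕ):ℝ))^2 * B ≤ A + A/(t+2) := by
    have hcast1 : ((j+3:ℕ):ℝ) = t+3 := by rw [ht]; push_cast; ring
    have hcast2 : ((m+1:ℕ):ℝ) = (m:ℝ)+1 := by push_cast; ring
    rw [hcast1, hcast2]
    have hden : (0:ℝ) < (t+3+((m:ℝ)+1))^2 := by positivity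
    have hAA : A + A/(t+2) = A*(t+3)/(t+2) := by field_simp; ring
    rw [hAA, div_mul_eq_mul_div, div_le_div_iff₀ hden h2pos]
    have e3 : B*(t+3)*(t+2)*(t+3) = A*(t+(m:ℝ)+4)*(t+(m:ℝ)+3)*(t+3) := by rw [id1]
    nlinarith [e3, mul_nonneg (mul_nonneg hA (by linarith : (0:ℝ) ≤ t+3))
      (by linarith [Nat.cast_nonneg (α := ℝ) m] : (0:ℝ) ≤ t+(m:ℝ)+4)]
  have hmul := mul_le_mul_of_nonneg_right coeff hp3.le
  have hm1 : (0:ℝ) < (m:ℝ)+1 := by positivity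
  have hAdiv : A/(t+2) = (((j+m+2).choose (j+2) : ℝ))/((m:ℝ)+1) := by
    rw [div_eq_div_iff h2pos.ne' hm1.ne']
    linarith [id2]
  calc ((j+3:ℕ):ℝ)^2 / (((j+3:ℕ):ℝ) + ((m+1:ℕ):ℝ))^2 * B * p^(j+3)
      ≤ (A + A/(t+2)) * p^(j+3) := hmul
    _ = p^2 * (A * p^(j+1)) + (p * ((((j+m+2)).choose (j+2) : ℝ) * p^(j+2)))/((m:ℝ)+1) := by
        rw [hAdiv]
        field_simp
        ring

private lemma tsum_part (p : ℝ) (hp : 0 < p) (hp1 : p < 1) (m : ℕ)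
    (inst : (k : ℕ) → Decidable (1 ≤ k ∧ k ∉ ({1,2} : Set ℕ))) :
    (∑' k : ℕ, @ite ℝ (1 ≤ k ∧ k ∉ ({1,2} : Set ℕ)) (inst k)
        (((k:ℝ)^2 / ((k:ℝ) + ((m+1:ℕ):ℝ))^2) * (Nat.choose (k+(m+1)) k : ℝ) * p^k) 0)
      ≤ p^2 * (1/(1-p)^(m+2) - 1)
        + (p * (1/(1-p)^(m+1) - 1 - ((m:ℝ)+1)*p))/((m:ℝ)+1) := by
  have hpn : ‖p‖ < 1 := by rw [Real.norm_eq_abs, abs_of_pos hp]; exact hp1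
  have hq : (0:ℝ) < 1 - p := by linarith
  have hsum1 : HasSum (fun i:ℕ => ((i+(m+1)).choose (m+1) : ℝ) * p^i) (1/(1-p)^(m+2)) := by
    have h := hasSum_choose_mul_geometric_of_norm_lt_one (𝕜 := ℝ) (m+1) hpn
    convert h using 2
  have hsum2 : HasSum (fun i:ℕ => ((i+m).choose m : ℝ) * p^i) (1/(1-p)^(m+1)) := by
    have h := hasSum_choose_mul_geometric_of_norm_lt_one (𝕜 := ℝ) m hpn
    convert h using 2
  set F : ℕ → ℝ := fun k => @ite ℝ (1 ≤ k ∧ k ∉ ({1,2} : Set ℕ)) (inst k)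
      (((k:ℝ)^2 / ((k:ℝ) + ((m+1:ℕ):ℝ))^2) * (Nat.choose (k+(m+1)) k : ℝ) * p^k) 0 with hF
  have hFnonneg : ∀ k, 0 ≤ F k := by
    intro k
    rw [hF]
    dsimp only
    split
    · have h1 : (0:ℝ) < (k:ℝ) + ((m+1:ℕ):ℝ) := by positivity
      positivity
    · exact le_refl 0
  have hFle : ∀ k, F k ≤ ((k+(m+1)).choose (m+1) : ℝ) * p^k := by
    intro k
    have hcnn : (0:ℝ) ≤ ((k+(m+1)).choose (m+1) : ℝ) := Nat.cast_nonneg _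
    have hpk : (0:ℝ) ≤ p^k := by positivity
    rw [hF]; dsimp only
    split
    · have hsymm : (k+(m+1)).choose k = (k+(m+1)).choose (m+1) := by
        have h := Nat.choose_symm (show k ≤ k+(m+1) by omega)
        rw [show k+(m+1)-k = m+1 by omega] at h
        exact h.symm
      rw [hsymm]
      have hden : (0:ℝ) < ((k:ℝ) + ((m+1:ℕ):ℝ))^2 := by positivity
      have h1 : (k:ℝ)^2 / ((k:ℝ) + ((m+1:ℕ):ℝ))^2 ≤ 1 := by
        rw [div_le_one hden]
        have : (0:ℝ) ≤ (k:ℝ) := Nat.cast_nonneg _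
        have h2 : (0:ℝ) < ((m+1:ℕ):ℝ) := by positivity
        nlinarith
      calc (k:ℝ)^2 / ((k:ℝ) + ((m+1:ℕ):ℝ))^2 * ((k+(m+1)).choose (m+1) : ℝ) * p^k
          ≤ 1 * ((k+(m+1)).choose (m+1) : ℝ) * p^k := by
            apply mul_le_mul_of_nonneg_right _ hpk
            exact mul_le_mul_of_nonneg_right h1 hcnn
        _ = ((k+(m+1)).choose (m+1) : ℝ) * p^k := by ring
    · positivity
  have hFsummable : Summable F :=
    Summable.of_nonneg_of_le hFnonneg hFle hsum1.summable
  -- split off first three (zero) terms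
  have h03 : ∑ i ∈ Finset.range 3, F i = 0 := by
    rw [Finset.sum_range_succ, Finset.sum_range_succ, Finset.sum_range_one]
    rw [hF]; dsimp only
    rw [if_neg (by norm_num), if_neg (by simp), if_neg (by simp)]
    ring
  have hshift : ∑' k, F k = ∑' j, F (j+3) := by
    rw [← Summable.sum_add_tsum_nat_add 3 hFsummable, h03, zero_add]
  set G1 : ℕ → ℝ := fun j => p^2 * ((((j+1)+(m+1)).choose (m+1) : ℝ) * p^(j+1)) with hG1
  set G2 : ℕ → ℝ := fun j => (p * ((((j+2)+m).choose m : ℝ) * p^(j+2)))/((m:ℝ)+1) with hG2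
  have hG1sum : Summable G1 := by
    have h := (summable_nat_add_iff 1).2 hsum1.summable
    exact h.mul_left (p^2)
  have hG2sum : Summable G2 := by
    have h := ((summable_nat_add_iff 2).2 hsum2.summable).mul_left p
    exact h.div_const ((m:ℝ)+1)
  have hterm : ∀ j, F (j+3) ≤ G1 j + G2 j := by
    intro j
    rw [hF, hG1, hG2]; dsimp only
    rw [if_pos ⟨by omega, by simp only [Set.mem_insert_iff, Set.mem_singleton_iff]; push_neg; omega⟩]
    exact term_bound p hp m j
  have hstep : ∑' j, F (j+3) ≤ ∑' j, (G1 j + G2 j) :=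
    Summable.tsum_le_tsum hterm ((summable_nat_add_iff 3).2 hFsummable) (hG1sum.add hG2sum)
  have hsplit : ∑' j, (G1 j + G2 j) = (∑' j, G1 j) + (∑' j, G2 j) :=
    Summable.tsum_add hG1sum hG2sum
  have htail1 : ∑' j, (((j+1)+(m+1)).choose (m+1) : ℝ) * p^(j+1) = 1/(1-p)^(m+2) - 1 := by
    have h := Summable.sum_add_tsum_nat_add (f := fun i:ℕ => ((i+(m+1)).choose (m+1) : ℝ) * p^i) 1
      hsum1.summable
    rw [hsum1.tsum_eq] at h
    have h0 : ∑ i ∈ Finset.range 1, ((i+(m+1)).choose (m+1) : ℝ) * p^i = 1 := by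
      rw [Finset.sum_range_one]
      simp [Nat.choose_self]
    rw [h0] at h
    linarith
  have htail2 : ∑' j, (((j+2)+m).choose m : ℝ) * p^(j+2)
      = 1/(1-p)^(m+1) - 1 - ((m:ℝ)+1)*p := by
    have h := Summable.sum_add_tsum_nat_add (f := fun i:ℕ => ((i+m).choose m : ℝ) * p^i) 2
      hsum2.summable
    rw [hsum2.tsum_eq] at h
    have h0 : ∑ i ∈ Finset.range 2, ((i+m).choose m : ℝ) * p^i = 1 + ((m:ℝ)+1)*p := by
      rw [Finset.sum_range_succ, Finset.sum_range_one]
      have h1 : (1+m).choose m = m+1 := by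
        have h := Nat.choose_symm (show m ≤ m+1 by omega)
        rw [show m+1-m = 1 by omega, Nat.choose_one_right] at h
        rw [show 1+m = m+1 by omega, ← h]
      rw [h1]
      norm_num [Nat.choose_self]
    rw [h0] at h
    linarith
  have hG1eq : ∑' j, G1 j = p^2 * (1/(1-p)^(m+2) - 1) := by
    rw [hG1, tsum_mul_left, htail1]
  have hG2eq : ∑' j, G2 j = (p * (1/(1-p)^(m+1) - 1 - ((m:ℝ)+1)*p))/((m:ℝ)+1) := by
    rw [hG2, tsum_div_const, tsum_mul_left, htail2]
  rw [hshift]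
  rw [hG1eq, hG2eq] at hsplit
  linarith [hstep, hsplit.le, hsplit.ge]

private lemma L2' : ∀ y : ℝ, 0 < y → y ≤ 7/4 →
    1 + 0.78175*y - 0.60655*y^2 ≤ Real.exp (-y) * (1+3*y) := by
  intro y hy h74
  have hp := pow4_le_exp_neg hy.le (by linarith)
  have h2 : (1 - y/4)^4 * (1+3*y) ≤ Real.exp (-y) * (1+3*y) :=
    mul_le_mul_of_nonneg_right hp (by linarith)
  have h0 := hy.le
  have hpoly : 1 + 0.78175*y - 0.60655*y^2 ≤ (1 - y/4)^4 * (1+3*y) := by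
    nlinarith [sq_nonneg (y - 7/5), mul_nonneg (sq_nonneg (y - 7/5)) h0,
      mul_nonneg (mul_nonneg (sq_nonneg (y - 7/5)) h0) h0,
      mul_nonneg (sq_nonneg (y - 7/5)) (sub_nonneg.2 h74),
      mul_nonneg h0 (sub_nonneg.2 h74), sq_nonneg y,
      mul_nonneg (mul_nonneg h0 h0) (sub_nonneg.2 h74)]
  linarith

-- exp(-y) ≤ (64/71)^16 for y ≥ 7/4
private lemma exp_ub_74 {y : ℝ} (h : 7/4 ≤ y) : Real.exp (-y) ≤ ((64:ℝ)/71)^16 := by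
  have h1 : (1:ℝ) + 7/64 ≤ Real.exp (7/64) := by
    have := Real.add_one_le_exp ((7:ℝ)/64); linarith
  have h2 : Real.exp ((7:ℝ)/4) = Real.exp ((7:ℝ)/64) ^ (16:ℕ) := by
    rw [← Real.exp_nat_mul]; congr 1; norm_num
  have h3 : ((71:ℝ)/64)^16 ≤ Real.exp ((7:ℝ)/4) := by
    rw [h2]
    apply pow_le_pow_left₀ (by norm_num) (by linarith)
  have h4 : Real.exp (-y) ≤ Real.exp (-(7/4)) := by
    apply Real.exp_le_exp.2; linarith
  have h5 : Real.exp (-((7:ℝ)/4)) ≤ ((64:ℝ)/71)^16 := by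
    rw [Real.exp_neg]
    have he : ((64:ℝ)/71)^16 = (((71:ℝ)/64)^16)⁻¹ := by
      rw [← inv_pow]; norm_num
    rw [he]
    exact inv_anti₀ (by positivity) h3
  linarith

private lemma KEY' (y p : ℝ) (hy : 0 < y) (hp : 0 < p) (hpy : p*(1+y) ≤ y) :
    y + 1 - Real.exp (-y)*(2*y+1) + 2*p*y*Real.exp (-y)
      ≤ 1.21825*y + 0.3883*p*y := by
  set E := Real.exp (-y) with hE
  have hEpos : 0 < E := Real.exp_pos _
  rcases le_or_gt (2*E) 0.3883 with hc | hc
  · have h1 := L1 y hy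
    have h2 : 0 ≤ p*y*(0.3883 - 2*E) :=
      mul_nonneg (mul_pos hp hy).le (by linarith)
    nlinarith [h1, h2]
  · have hy74 : y ≤ 7/4 := by
      by_contra hcon
      push_neg at hcon
      have := exp_ub_74 (le_of_lt (by linarith : 7/4 < y))
      have hnum : ((64:ℝ)/71)^16 < 0.194 := by norm_num
      rw [← hE] at this
      nlinarith
    have hl2 := L2' y hy hy74
    have hint : 0 ≤ (y - p*(1+y)) * ((2*E - 0.3883)*y) :=
      mul_nonneg (by linarith) (mul_nonneg (by linarith) hy.le)
    nlinarith [hl2, hint, mul_pos hy hEpos, hy, sq_nonneg y]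

private lemma Dbound (p : ℝ) (hp : 0 < p) (hp1 : p < 1) (m : ℕ) :
    1/(1-p) - (1-p)^(m+1) + (1 - (1-p)^(m+1)*(1+((m:ℝ)+1)*p))/(((m:ℝ)+1)*p)
      ≤ (1.21825 + 0.3883*p)/(1-p) := by
  set q := 1-p with hqdef
  have hq : 0 < q := by rw [hqdef]; linarith
  set n : ℝ := (m:ℝ)+1 with hn
  have hnpos : (0:ℝ) < n := by positivity
  have hn1 : (1:ℝ) ≤ n := by
    rw [hn]; have := Nat.cast_nonneg (α := ℝ) m; linarith
  set y := n*p/q with hy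
  have hypos : 0 < y := div_pos (mul_pos hnpos hp) hq
  have hnp : n*p = y*q := by rw [hy]; field_simp
  have hE : Real.exp (-y) ≤ q^(m+1) := by
    have h2 := Real.add_one_le_exp (p/q)
    have h3 : 1/q ≤ Real.exp (p/q) := by
      have he : p/q + 1 = 1/q := by
        field_simp [hqdef]
        linarith
      linarith
    have h1 : Real.exp (-(p/q)) ≤ q := by
      rw [Real.exp_neg]
      have := inv_anti₀ (by positivity : (0:ℝ) < 1/q) h3
      rwa [one_div, inv_inv] at this
    have h4 : Real.exp (-(p/q)) ^ (m+1) ≤ q^(m+1) :=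
      pow_le_pow_left₀ (Real.exp_pos _).le h1 _
    have h5 : Real.exp (-(p/q))^(m+1) = Real.exp (-y) := by
      rw [← Real.exp_nat_mul]
      congr 1
      rw [hy, hn]
      push_cast
      field_simp
    linarith
  have hpy : p*(1+y) ≤ y := by
    have hnum : 0 ≤ (n*p - p*q - n*p*p)/q := by
      apply div_nonneg _ hq.le
      rw [hqdef]
      nlinarith [mul_nonneg hp.le (mul_nonneg (sub_nonneg.2 hn1) (by linarith : (0:ℝ) ≤ 1-p))]
    have hid : y - p*(1+y) = (n*p - p*q - n*p*p)/q := by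
      rw [hy]; field_simp; ring
    linarith [hid ▸ hnum]
  have key := KEY' y p hypos hp hpy
  set E' := Real.exp (-y) with hE'
  have hE'pos : 0 < E' := Real.exp_pos _
  have hnppos : 0 < n*p := mul_pos hnpos hp
  have hmono : 1/q - q^(m+1) + (1 - q^(m+1)*(1+n*p))/(n*p)
      ≤ 1/q - E' + (1 - E'*(1+n*p))/(n*p) := by
    have h7 : (1 - q^(m+1)*(1+n*p))/(n*p) ≤ (1 - E'*(1+n*p))/(n*p) := by
      apply (div_le_div_iff_of_pos_right hnppos).mpr
      nlinarith [hE, hnppos]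
    linarith [hE, h7]
  have hyq : 0 < y*q := mul_pos hypos hq
  have hfin : 1/q - E' + (1 - E'*(1+n*p))/(n*p) ≤ (1.21825+0.3883*p)/q := by
    rw [hnp]
    have hLHS : 1/q - E' + (1 - E'*(1+y*q))/(y*q)
        = (y + 1 - E'*(2*y+1) + 2*p*y*E')/(y*q) := by
      rw [hqdef]
      field_simp [show (1:ℝ)-p ≠ 0 by linarith]
      ring
    rw [hLHS, div_le_div_iff₀ hyq hq]
    nlinarith [key, mul_le_mul_of_nonneg_right key hq.le]
  linarith [hmono, hfin]

private lemma hJ_le (p : ℝ) (hp : 0 < p) (hp1 : p < 1) (m : ℕ) :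
    hJfun {1,2} (m+1) p
      ≤ 1/(1-p) - (1-p)^(m+1) + (1 - (1-p)^(m+1)*(1+((m:ℝ)+1)*p))/(((m:ℝ)+1)*p) := by
  unfold hJfun
  have hc : (0:ℝ) ≤ (1-p)^(m+1)/p^2 := by
    have hq : (0:ℝ) < 1-p := by linarith
    positivity
  refine le_trans (mul_le_mul_of_nonneg_left (tsum_part p hp hp1 m _) hc) (le_of_eq ?_)
  have hq : (0:ℝ) < 1-p := by linarith
  have hqne : (1-p) ≠ 0 := ne_of_gt hq
  have hpne : p ≠ 0 := ne_of_gt hp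
  have hm1 : ((m:ℝ)+1) ≠ 0 := by positivity
  rw [show m+2 = (m+1)+1 from rfl, pow_succ]
  field_simp
  ring

theorem stmt4 (p : ℝ) (hp : 0 < p) (hp1 : p < 1) :
    CJ {1, 2} p < 1.2183 + 1.6066 * p / (1 - p) := by
  have hq : (0:ℝ) < 1-p := by linarith
  have hb : ∀ s : ℕ+, hJfun {1,2} (s:ℕ) p ≤ (1.21825+0.3883*p)/(1-p) := by
    intro s
    obtain ⟨m, hm⟩ : ∃ m : ℕ, (s:ℕ) = m+1 := ⟨(s:ℕ)-1, by
      have := s.pos; omega⟩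
    rw [hm]
    exact (hJ_le p hp hp1 m).trans (Dbound p hp hp1 m)
  have hsup : CJ {1,2} p ≤ (1.21825+0.3883*p)/(1-p) := ciSup_le hb
  refine lt_of_le_of_lt hsup ?_
  rw [div_lt_iff₀ hq]
  have he : (1.2183 + 1.6066*p/(1-p)) * (1-p) = 1.2183*(1-p) + 1.6066*p := by
    field_simp
  rw [he]
  linarith
end

section
/- Let Ω_n = {1,2,…,n} and let μ : 2^{Ω_n} → [0,∞) be a function on subsets of Ω_n, and let C_2, C_3, …, C_n be positive real numbers, such that for every subset A ⊆ Ω_n with |A| ≥ 2: μ(A) ≤ (1/|A|) Σ_{k∈A} μ({k}) + (C_{|A|}/|A|) Σ_{k∈A} μ({k}) μ(A∖{k}). Then for every subset A ⊆ Ω_n with |A| ≥ 2: μ(A) ≤ (1/|A|) Σ_{k∈A} μ({k}) + Σ_{k=2}^{|A|} C_{|A|}·C_{|A|−1}···C_{|A|−k+2} · ((1/|A|) Σ_{j∈A} μ({j}))^k. -/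
lemma lemP (k : ℕ) : ∀ (m : ℕ) (x : ℝ), k + 2 ≤ m → 0 ≤ x → x ≤ 1 →
    (m:ℝ)^(k+2) * x * (1-x)^(k+1) ≤ ((m:ℝ)-1)^k * ((k+1) + ((m:ℝ)-(k+2))*(m:ℝ)*x) := by
  induction k with
  | zero =>
    intro m x hm h0 h1
    push_cast
    nlinarith [sq_nonneg (1 - (m:ℝ)*x)]
  | succ k ih =>
    intro m x hm h0 h1
    have hmk : (0:ℝ) ≤ (m:ℝ) - (k+2) := by
      have : (k+3 : ℝ) ≤ m := by exact_mod_cast hm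
      linarith
    have hm1 : (0:ℝ) ≤ (m:ℝ) - 1 := by
      have : (k+3 : ℝ) ≤ m := by exact_mod_cast hm
      linarith
    have h2 := ih m x (by omega) h0 h1
    have hfac : (0:ℝ) ≤ (m:ℝ)*(1-x) := mul_nonneg (Nat.cast_nonneg m) (by linarith)
    push_cast
    calc (m:ℝ)^(k+1+2) * x * (1-x)^(k+1+1)
        = ((m:ℝ)*(1-x)) * ((m:ℝ)^(k+2) * x * (1-x)^(k+1)) := by ring
      _ ≤ ((m:ℝ)*(1-x)) * (((m:ℝ)-1)^k * ((k+1) + ((m:ℝ)-(k+2))*(m:ℝ)*x)) :=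
          mul_le_mul_of_nonneg_left h2 hfac
      _ ≤ ((m:ℝ)-1)^(k+1) * ((k+1+1) + ((m:ℝ)-(k+1+2))*(m:ℝ)*x) := by
          have key : ((m:ℝ)-1)^(k+1) * ((k+1+1) + ((m:ℝ)-(k+1+2))*(m:ℝ)*x)
              - ((m:ℝ)*(1-x)) * (((m:ℝ)-1)^k * ((k+1) + ((m:ℝ)-(k+2))*(m:ℝ)*x))
              = ((m:ℝ)-1)^k * (((m:ℝ)-(k+2)) * (1-(m:ℝ)*x)^2) := by
            rw [pow_succ]; ring
          nlinarith [mul_nonneg (pow_nonneg hm1 k) (mul_nonneg hmk (sq_nonneg (1-(m:ℝ)*x)))]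


lemma lemP' (k m : ℕ) (y T : ℝ) (hm : k + 2 ≤ m) (h0 : 0 ≤ y) (h1 : y ≤ T) :
    (m:ℝ)^(k+2) * y * (T-y)^(k+1) ≤ ((m:ℝ)-1)^k * ((k+1)*T^(k+2) + ((m:ℝ)-(k+2))*(m:ℝ)*y*T^(k+1)) := by
  rcases eq_or_lt_of_le (h0.trans h1) with hT | hT
  · have hy : y = 0 := le_antisymm (hT ▸ h1) h0
    simp [hy, ← hT]
  · have hTne : T ≠ 0 := ne_of_gt hT
    have h := lemP k m (y/T) hm (div_nonneg h0 hT.le) ((div_le_one hT).2 h1)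
    have h2 := mul_le_mul_of_nonneg_right h (le_of_lt (pow_pos hT (k+2)))
    have h1t : (1 - y/T) = (T - y)/T := by field_simp
    have c1 : (y/T)*T = y := div_mul_cancel₀ y hTne
    have c2 : ((T-y)/T)^(k+1)*T^(k+1) = (T-y)^(k+1) := by
      rw [← mul_pow, div_mul_cancel₀ _ hTne]
    have e1 : (m:ℝ)^(k+2) * (y/T) * (1-y/T)^(k+1) * T^(k+2)
        = (m:ℝ)^(k+2) * y * (T-y)^(k+1) := by
      rw [h1t]
      calc (m:ℝ)^(k+2) * (y/T) * ((T-y)/T)^(k+1) * T^(k+2)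
          = (m:ℝ)^(k+2) * ((y/T)*T) * (((T-y)/T)^(k+1) * T^(k+1)) := by ring
        _ = (m:ℝ)^(k+2) * y * (T-y)^(k+1) := by rw [c1, c2]
    have e2 : ((m:ℝ)-1)^k * ((k+1) + ((m:ℝ)-(k+2))*(m:ℝ)*(y/T)) * T^(k+2)
        = ((m:ℝ)-1)^k * ((k+1)*T^(k+2) + ((m:ℝ)-(k+2))*(m:ℝ)*y*T^(k+1)) := by
      calc ((m:ℝ)-1)^k * ((k+1) + ((m:ℝ)-(k+2))*(m:ℝ)*(y/T)) * T^(k+2)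
          = ((m:ℝ)-1)^k * ((k+1)*T^(k+2) + ((m:ℝ)-(k+2))*(m:ℝ)*((y/T)*T)*T^(k+1)) := by ring
        _ = _ := by rw [c1]
    rw [e1, e2] at h2
    exact h2

lemma keySum (n : ℕ) (A : Finset (Fin n)) (x : Fin n → ℝ)
    (hx : ∀ k ∈ A, 0 ≤ x k) (k : ℕ) (hjm : k + 2 ≤ A.card) :
    ∑ i ∈ A, x i * ((1/((A.card:ℝ)-1)) * ((∑ l ∈ A, x l) - x i))^(k+1)
      ≤ (A.card:ℝ) * ((1/(A.card:ℝ)) * ∑ l ∈ A, x l)^(k+2) := by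
  set m := A.card with hm
  set T := ∑ l ∈ A, x l with hT
  have hm2 : (2:ℝ) ≤ (m:ℝ) := by exact_mod_cast le_trans (by omega) hjm
  have hmpos : (0:ℝ) < m := by linarith
  have hm1pos : (0:ℝ) < (m:ℝ) - 1 := by linarith
  have hmne : (m:ℝ) ≠ 0 := ne_of_gt hmpos
  have hm1ne : (m:ℝ) - 1 ≠ 0 := ne_of_gt hm1pos
  have key : ∑ i ∈ A, x i * (T - x i)^(k+1) ≤ ((m:ℝ)-1)^(k+1) * T^(k+2) / (m:ℝ)^(k+1) := by
    have hsum : ∑ i ∈ A, (m:ℝ)^(k+2) * x i * (T - x i)^(k+1)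
        ≤ ∑ i ∈ A, ((m:ℝ)-1)^k * ((k+1)*T^(k+2) + ((m:ℝ)-(k+2))*(m:ℝ)*(x i)*T^(k+1)) := by
      refine Finset.sum_le_sum fun i hi => lemP' k m (x i) T hjm (hx i hi) ?_
      exact Finset.single_le_sum hx hi
    have hL : ∑ i ∈ A, (m:ℝ)^(k+2) * x i * (T - x i)^(k+1)
        = (m:ℝ)^(k+2) * ∑ i ∈ A, x i * (T - x i)^(k+1) := by
      rw [Finset.mul_sum]; exact Finset.sum_congr rfl fun i _ => by ring
    have hR : ∑ i ∈ A, ((m:ℝ)-1)^k * ((k+1)*T^(k+2) + ((m:ℝ)-(k+2))*(m:ℝ)*(x i)*T^(k+1))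
        = (m:ℝ) * (((m:ℝ)-1)^(k+1) * T^(k+2)) := by
      have hcg : ∀ i ∈ A, ((m:ℝ)-1)^k * ((k+1)*T^(k+2) + ((m:ℝ)-(k+2))*(m:ℝ)*(x i)*T^(k+1))
          = ((m:ℝ)-1)^k * ((k+1)*T^(k+2))
            + (((m:ℝ)-1)^k * (((m:ℝ)-(k+2))*(m:ℝ)*T^(k+1))) * x i := fun i _ => by ring
      rw [Finset.sum_congr rfl hcg, Finset.sum_add_distrib, Finset.sum_const,
        ← Finset.mul_sum, ← hT, nsmul_eq_mul, ← hm, pow_succ]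
      ring
    rw [hL, hR] at hsum
    rw [le_div_iff₀ (pow_pos hmpos (k+1))]
    calc (∑ i ∈ A, x i * (T - x i)^(k+1)) * (m:ℝ)^(k+1)
        = ((m:ℝ)^(k+2) * ∑ i ∈ A, x i * (T - x i)^(k+1)) / (m:ℝ) := by
          rw [pow_succ]
          field_simp
          ring
      _ ≤ ((m:ℝ) * (((m:ℝ)-1)^(k+1) * T^(k+2))) / (m:ℝ) := by gcongr
      _ = ((m:ℝ)-1)^(k+1) * T^(k+2) := by
          field_simp
  calc ∑ i ∈ A, x i * ((1/((m:ℝ)-1)) * (T - x i))^(k+1)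
      = (1/((m:ℝ)-1))^(k+1) * ∑ i ∈ A, x i * (T - x i)^(k+1) := by
        rw [Finset.mul_sum]; exact Finset.sum_congr rfl fun i _ => by rw [mul_pow]; ring
    _ ≤ (1/((m:ℝ)-1))^(k+1) * (((m:ℝ)-1)^(k+1) * T^(k+2) / (m:ℝ)^(k+1)) :=
        mul_le_mul_of_nonneg_left key (by positivity)
    _ = (m:ℝ) * ((1/(m:ℝ)) * T)^(k+2) := by
        rw [mul_pow, div_pow, one_pow]
        field_simp
        have h1 : (m:ℝ)^2 * ((m:ℝ)⁻¹)^2 = 1 := by rw [← mul_pow, mul_inv_cancel₀ hmne, one_pow]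
        have h2 : (m:ℝ)^k * ((m:ℝ)⁻¹)^k = 1 := by rw [← mul_pow, mul_inv_cancel₀ hmne, one_pow]
        linear_combination (-(T^2*T^k) * ((m:ℝ)^k * ((m:ℝ)⁻¹)^k)) * h1 + (-(T^2*T^k)) * h2



theorem stmt10 (n : ℕ) (μ : Finset (Fin n) → ℝ) (hμ : ∀ A, 0 ≤ μ A)
    (C : ℕ → ℝ) (hC : ∀ m, 2 ≤ m → m ≤ n → 0 < C m)
    (hrec : ∀ A : Finset (Fin n), 2 ≤ A.card →
      μ A ≤ (1/(A.card:ℝ)) * ∑ k ∈ A, μ {k}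
        + (C A.card / (A.card:ℝ)) * ∑ k ∈ A, μ {k} * μ (A.erase k)) :
    ∀ A : Finset (Fin n), 2 ≤ A.card →
      μ A ≤ (1/(A.card:ℝ)) * ∑ k ∈ A, μ {k}
        + ∑ k ∈ Finset.Icc 2 A.card,
            (∏ i ∈ Finset.Icc (A.card - k + 2) A.card, C i)
              * ((1/(A.card:ℝ)) * ∑ j ∈ A, μ {j})^k := by
  suffices H : ∀ m : ℕ, ∀ A : Finset (Fin n), A.card = m → 2 ≤ A.card →
      μ A ≤ (1/(A.card:ℝ)) * ∑ k ∈ A, μ {k}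
        + ∑ k ∈ Finset.Icc 2 A.card,
            (∏ i ∈ Finset.Icc (A.card - k + 2) A.card, C i)
              * ((1/(A.card:ℝ)) * ∑ j ∈ A, μ {j})^k by
    exact fun A hA => H A.card A rfl hA
  intro m
  induction m using Nat.strong_induction_on with
  | _ m ih =>
  intro A hAm hA2
  subst hAm
  have hmn : A.card ≤ n := by
    simpa using Finset.card_le_univ A
  have hmR : (2:ℝ) ≤ (A.card:ℝ) := by exact_mod_cast hA2
  have hmne : (A.card:ℝ) ≠ 0 := by linarith
  set T := ∑ j ∈ A, μ {j} with hTdef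
  set s := (1/(A.card:ℝ)) * T with hsdef
  set P : ℕ → ℝ := fun i => ∏ l ∈ Finset.Icc (A.card - 1 - i + 2) (A.card - 1), C l with hPdef
  set Sk : Fin n → ℝ := fun k => (1/((A.card:ℝ)-1)) * (T - μ {k}) with hSkdef
  -- pointwise bound on μ (A.erase k)
  have hB : ∀ k ∈ A, μ (A.erase k) ≤ Sk k + ∑ i ∈ Finset.Icc 2 (A.card - 1), P i * (Sk k)^i := by
    intro k hk
    have hce : (A.erase k).card = A.card - 1 := Finset.card_erase_of_mem hk
    have hse : ∑ l ∈ A.erase k, μ {l} = T - μ {k} := Finset.sum_erase_eq_sub hk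
    have hcast : (((A.card - 1 : ℕ)):ℝ) = (A.card:ℝ) - 1 := by
      have : 1 ≤ A.card := by omega
      push_cast [this]
      ring
    by_cases h2 : 2 ≤ (A.erase k).card
    · have hIH := ih (A.card - 1) (by omega) (A.erase k) hce h2
      rw [hce, hse, hcast] at hIH
      exact hIH
    · have h1 : (A.erase k).card = 1 := by omega
      have hA2' : A.card = 2 := by omega
      obtain ⟨l, hl⟩ := Finset.card_eq_one.mp h1
      have hsl : T - μ {k} = μ {l} := by
        rw [← hse, hl, Finset.sum_singleton]
      have hIcc : Finset.Icc 2 (A.card - 1) = ∅ := by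
        rw [hA2']
        rfl
      rw [hl, hIcc, hSkdef]
      simp only [Finset.sum_empty, add_zero, hA2', hsl]
      norm_num
  -- key moment bound
  have hKey : ∀ i : ℕ, 1 ≤ i → i + 1 ≤ A.card →
      ∑ k ∈ A, μ {k} * (Sk k)^i ≤ (A.card:ℝ) * s^(i+1) := by
    intro i hi1 hi2
    obtain ⟨ii, rfl⟩ : ∃ ii, i = ii + 1 := ⟨i - 1, by omega⟩
    simpa [hSkdef, hsdef, hTdef] using
      keySum n A (fun k => μ {k}) (fun k _ => hμ _) ii (by omega)
  have hPnn : ∀ i ∈ Finset.Icc 2 (A.card - 1), 0 ≤ P i := by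
    intro i _
    refine Finset.prod_nonneg fun l hl => ?_
    rw [Finset.mem_Icc] at hl
    exact le_of_lt (hC l (by omega) (by omega))
  have hs0 : 0 ≤ s := by
    rw [hsdef, hTdef]
    have : 0 ≤ T := Finset.sum_nonneg fun k _ => hμ _
    positivity
  have hCm : 0 < C A.card := hC A.card hA2 hmn
  refine (hrec A hA2).trans (add_le_add_right ?_ _)
  calc (C A.card / (A.card:ℝ)) * ∑ k ∈ A, μ {k} * μ (A.erase k)
      ≤ (C A.card / (A.card:ℝ)) * ∑ k ∈ A, μ {k} * (Sk k + ∑ i ∈ Finset.Icc 2 (A.card - 1), P i * (Sk k)^i) := by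
        refine mul_le_mul_of_nonneg_left (Finset.sum_le_sum fun k hk => ?_) (by positivity)
        exact mul_le_mul_of_nonneg_left (hB k hk) (hμ _)
    _ = (C A.card / (A.card:ℝ)) * ((∑ k ∈ A, μ {k} * Sk k)
          + ∑ i ∈ Finset.Icc 2 (A.card - 1), P i * ∑ k ∈ A, μ {k} * (Sk k)^i) := by
        congr 1
        simp only [mul_add, Finset.mul_sum]
        rw [Finset.sum_add_distrib]
        congr 1
        rw [Finset.sum_comm]
        exact Finset.sum_congr rfl fun i _ =>
          Finset.sum_congr rfl fun k _ => by ring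
    _ ≤ (C A.card / (A.card:ℝ)) * (((A.card:ℝ) * s^2)
          + ∑ i ∈ Finset.Icc 2 (A.card - 1), P i * ((A.card:ℝ) * s^(i+1))) := by
        refine mul_le_mul_of_nonneg_left (add_le_add ?_ ?_) (by positivity)
        · simpa using hKey 1 le_rfl (by omega)
        · refine Finset.sum_le_sum fun i hi => ?_
          have hi' := Finset.mem_Icc.mp hi
          exact mul_le_mul_of_nonneg_left (hKey i (by omega) (by omega)) (hPnn i hi)
    _ = ∑ k ∈ Finset.Icc 2 A.card,
          (∏ i ∈ Finset.Icc (A.card - k + 2) A.card, C i) * s^k := by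
        have hsplit : ∑ k ∈ Finset.Icc 2 A.card,
            (∏ i ∈ Finset.Icc (A.card - k + 2) A.card, C i) * s^k
            = C A.card * s^2
              + ∑ i ∈ Finset.Icc 2 (A.card - 1), (C A.card * P i) * s^(i+1) := by
          rw [← Finset.Ioc_insert_left hA2, Finset.sum_insert Finset.left_notMem_Ioc]
          congr 1
          · rw [show A.card - 2 + 2 = A.card from by omega, Finset.Icc_self,
              Finset.prod_singleton]
          · have himg : Finset.Ioc 2 A.card = (Finset.Icc 2 (A.card - 1)).image (· + 1) := by
              rw [Finset.image_add_right_Icc]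
              rw [show A.card - 1 + 1 = A.card from by omega]
              exact (Finset.Icc_add_one_left_eq_Ioc 2 A.card).symm
            rw [himg, Finset.sum_image (by intro a _ b _ h; simp only at h; omega)]
            refine Finset.sum_congr rfl fun j hj => ?_
            have hj' := Finset.mem_Icc.mp hj
            congr 1
            have hins : Finset.Icc (A.card - (j+1) + 2) A.card
                = insert A.card (Finset.Icc (A.card - 1 - j + 2) (A.card - 1)) := by
              ext y
              simp only [Finset.mem_Icc, Finset.mem_insert]
              omega
            rw [hins, Finset.prod_insert (by
              simp only [Finset.mem_Icc]
              omega)]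
        rw [hsplit, mul_add, Finset.mul_sum]
        congr 1
        · field_simp
        · refine Finset.sum_congr rfl fun i _ => ?_
          field_simp
end

section
/- Let Y be a real random variable with a Lebesgue density, 𝔼Y = 0, and finite χ²-distance to the standard normal. If χ²(Y,𝒩) < 1/2, then 𝔼 e^{tY} < e^{t²} for all real t ≠ 0. Moreover, inf_{x>0} (e^{x/2} − 1)²/(e^x − 1 − x) = 1/2. -/
open MeasureTheory ProbabilityTheory Real

/-- Density of the standard normal distribution. -/
noncomputable def stdGaussianDensity (x : ℝ) : ℝ := Real.exp (-x^2/2) / Real.sqrt (2*Real.pi)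

/-- χ² distance between (the law of) a random variable `X` (with Lebesgue density given by
`MeasureTheory.pdf`) and the standard normal distribution. -/
noncomputable def chiSqDist {Ω : Type*} [MeasureSpace Ω] (X : Ω → ℝ) : ℝ :=
  ∫ x, ((MeasureTheory.pdf X ℙ volume x).toReal / stdGaussianDensity x - 1)^2
    * stdGaussianDensity x

/-- The χ² distance of `X` to the standard normal is finite (the defining integral converges). -/
def HasFiniteChiSq {Ω : Type*} [MeasureSpace Ω] (X : Ω → ℝ) : Prop :=
  MeasureTheory.Integrable (fun x =>
    ((MeasureTheory.pdf X ℙ volume x).toReal / stdGaussianDensity x - 1)^2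
      * stdGaussianDensity x)



open Filter Topology


lemma aux_exp_sq (x : ℝ) : exp (x/2) ^ 2 = exp x := by
  rw [← Real.exp_nat_mul]; ring

lemma aux_key {x : ℝ} (hx : 0 ≤ x) : exp x - 1 - x ≤ 2 * (exp (x/2) - 1)^2 := by
  have hderiv : ∀ y : ℝ, HasDerivAt (fun y => exp y - 4 * exp (y/2) + y + 3)
      ((exp (y/2) - 1)^2) y := by
    intro y
    have h1 : HasDerivAt (fun y : ℝ => exp (y/2)) (exp (y/2) * (1/2)) y := by
      have := (((hasDerivAt_id y).div_const 2)).exp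
      simpa using this
    have h5 := (((Real.hasDerivAt_exp y).sub (h1.const_mul 4)).add (hasDerivAt_id y)).add_const 3
    have : (exp (y/2) - 1)^2 = exp y - 4 * (exp (y/2) * (1/2)) + 1 := by
      have := aux_exp_sq y; nlinarith
    rw [this]
    exact h5
  have hmono : Monotone (fun y => exp y - 4 * exp (y/2) + y + 3) := by
    apply monotone_of_deriv_nonneg
    · exact fun y => (hderiv y).differentiableAt
    · intro y
      rw [(hderiv y).deriv]
      positivity
  have h0 := hmono hx
  simp only [Real.exp_zero] at h0
  norm_num at h0
  nlinarith [aux_exp_sq x, h0]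

lemma aux_inf :
    (⨅ x : {x : ℝ // 0 < x}, (exp ((x:ℝ)/2) - 1)^2 / (exp (x:ℝ) - 1 - (x:ℝ))) = 1/2 := by
  have hden : ∀ x : ℝ, 0 < x → 0 < exp x - 1 - x := by
    intro x hx
    have := Real.add_one_lt_exp (ne_of_gt hx)
    linarith
  have hlb : ∀ x : {x : ℝ // 0 < x},
      1/2 ≤ (exp ((x:ℝ)/2) - 1)^2 / (exp (x:ℝ) - 1 - (x:ℝ)) := by
    rintro ⟨x, hx⟩
    rw [le_div_iff₀ (hden x hx)]
    have := aux_key hx.le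
    linarith
  have hbdd : BddBelow (Set.range fun x : {x : ℝ // 0 < x} =>
      (exp ((x:ℝ)/2) - 1)^2 / (exp (x:ℝ) - 1 - (x:ℝ))) := by
    refine ⟨1/2, ?_⟩
    rintro y ⟨x, rfl⟩
    exact hlb x
  refine le_antisymm ?_ (le_ciInf hlb)
  -- upper bound: ratio x ≤ exp x / 2, take x = 1/(n+1) → 0
  have hub : ∀ x : ℝ, 0 < x →
      (exp (x/2) - 1)^2 / (exp x - 1 - x) ≤ exp x / 2 := by
    intro x hx
    rw [div_le_iff₀ (hden x hx)]
    have h1 : exp (x/2) - 1 ≤ (x/2) * exp (x/2) := by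
      have h := Real.add_one_le_exp (-(x/2))
      have hpos := Real.exp_pos (x/2)
      have hprod : exp (-(x/2)) * exp (x/2) = 1 := by
        rw [← Real.exp_add]; simp
      nlinarith
    have h2 : 1 + x + x^2/2 ≤ exp x := Real.quadratic_le_exp_of_nonneg hx.le
    have h3 : (exp (x/2) - 1)^2 ≤ (x/2 * exp (x/2))^2 := by
      have h0 : 0 ≤ exp (x/2) - 1 := by
        have := Real.add_one_le_exp (x/2); nlinarith [Real.exp_pos (x/2)]
      exact pow_le_pow_left₀ h0 h1 2
    have h4 : (x/2 * exp (x/2))^2 = x^2/4 * exp x := by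
      have := aux_exp_sq x; nlinarith [this]
    nlinarith [Real.exp_pos x]
  have hseq : Tendsto (fun n : ℕ => exp (1/(n+1)) / 2) atTop (𝓝 (1/2)) := by
    have h0 : Tendsto (fun n : ℕ => (1:ℝ)/(n+1)) atTop (𝓝 0) :=
      tendsto_one_div_add_atTop_nhds_zero_nat
    have := ((Real.continuous_exp.tendsto 0).comp h0).div_const 2
    simpa using this
  refine ge_of_tendsto' hseq fun n => ?_
  have hxpos : (0:ℝ) < 1/(n+1) := by positivity
  calc (⨅ x : {x : ℝ // 0 < x}, (exp ((x:ℝ)/2) - 1)^2 / (exp (x:ℝ) - 1 - (x:ℝ)))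
      ≤ (exp ((1/(n+1))/2) - 1)^2 / (exp (1/(n+1)) - 1 - (1/(n+1))) :=
        ciInf_le hbdd ⟨1/(n+1), hxpos⟩
    _ ≤ exp (1/(n+1)) / 2 := hub _ hxpos


lemma gint0_int : Integrable fun x : ℝ => exp (-x^2/2) := by
  have := integrable_exp_neg_mul_sq (by norm_num : (0:ℝ) < 1/2)
  simpa [neg_div, div_eq_inv_mul, mul_comm] using this

lemma gint0 : ∫ x : ℝ, exp (-x^2/2) = Real.sqrt (2*π) := by
  have h := integral_gaussian (1/2 : ℝ)
  rw [show π / (1/2 : ℝ) = 2*π by ring] at h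
  rw [← h]
  congr 1 with x
  ring_nf

lemma gshift (s x : ℝ) : exp (s*x) * exp (-x^2/2) = exp (s^2/2) * exp (-(x-s)^2/2) := by
  rw [← Real.exp_add, ← Real.exp_add]; ring_nf

lemma gint1_int (s : ℝ) : Integrable fun x : ℝ => exp (s*x) * exp (-x^2/2) := by
  simp_rw [gshift s]
  exact (gint0_int.comp_sub_right s).const_mul _

lemma gint1 (s : ℝ) : ∫ x : ℝ, exp (s*x) * exp (-x^2/2) = Real.sqrt (2*π) * exp (s^2/2) := by
  simp_rw [gshift s]
  rw [integral_const_mul, integral_sub_right_eq_self (fun x : ℝ => exp (-x^2/2)) s, gint0]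
  ring

lemma gint_x_int : Integrable fun x : ℝ => x * exp (-x^2/2) := by
  have := integrable_mul_exp_neg_mul_sq (by norm_num : (0:ℝ) < 1/2)
  simpa [neg_div, div_eq_inv_mul, mul_comm] using this

lemma gint_x : ∫ x : ℝ, x * exp (-x^2/2) = 0 := by
  have hderiv : ∀ x : ℝ, HasDerivAt (fun y : ℝ => -exp (-y^2/2)) (x * exp (-x^2/2)) x := by
    intro x
    have h1 : HasDerivAt (fun y : ℝ => -y^2/2) (-x) x := by
      have := ((hasDerivAt_pow 2 x).neg).div_const 2
      simpa using this.congr_deriv (by ring)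
    have := h1.exp.neg
    exact this.congr_deriv (by ring)
  exact integral_eq_zero_of_hasDerivAt_of_integrable hderiv gint_x_int gint0_int.neg

lemma gint_sq_int : Integrable fun x : ℝ => x^2 * exp (-x^2/2) := by
  have := integrable_rpow_mul_exp_neg_mul_sq (by norm_num : (0:ℝ) < 1/2)
    (by norm_num : (-1:ℝ) < 2)
  have h2 : ∀ x : ℝ, x ^ (2:ℝ) = x ^ (2:ℕ) := fun x => by
    rw [← Real.rpow_natCast x 2]; norm_num
  simp_rw [h2] at this
  simpa [neg_div, div_eq_inv_mul, mul_comm] using this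

lemma gint_sq : ∫ x : ℝ, x^2 * exp (-x^2/2) = Real.sqrt (2*π) := by
  have hderiv : ∀ x : ℝ, HasDerivAt (fun y : ℝ => -(y * exp (-y^2/2)))
      (x^2 * exp (-x^2/2) - exp (-x^2/2)) x := by
    intro x
    have h1 : HasDerivAt (fun y : ℝ => -y^2/2) (-x) x := by
      have := ((hasDerivAt_pow 2 x).neg).div_const 2
      simpa using this.congr_deriv (by ring)
    have h2 := ((hasDerivAt_id x).mul h1.exp).neg
    exact h2.congr_deriv (by simp only [id]; ring)
  have h0 := integral_eq_zero_of_hasDerivAt_of_integrable hderiv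
    (gint_sq_int.sub gint0_int) gint_x_int.neg
  rw [integral_sub gint_sq_int gint0_int, gint0] at h0
  linarith

lemma gint_x_exp_int (s : ℝ) : Integrable fun x : ℝ => x * (exp (s*x) * exp (-x^2/2)) := by
  have : (fun x : ℝ => x * (exp (s*x) * exp (-x^2/2)))
      = fun x => exp (s^2/2) * ((x - s) * exp (-(x-s)^2/2) + s * exp (-(x-s)^2/2)) := by
    funext x; rw [gshift s]; ring
  rw [this]
  exact ((gint_x_int.comp_sub_right s).add ((gint0_int.comp_sub_right s).const_mul s)).const_mul _

lemma gint_x_exp (s : ℝ) :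
    ∫ x : ℝ, x * (exp (s*x) * exp (-x^2/2)) = Real.sqrt (2*π) * s * exp (s^2/2) := by
  have : (fun x : ℝ => x * (exp (s*x) * exp (-x^2/2)))
      = fun x => exp (s^2/2) * ((x - s) * exp (-(x-s)^2/2) + s * exp (-(x-s)^2/2)) := by
    funext x; rw [gshift s]; ring
  rw [this]
  rw [integral_const_mul, integral_add (gint_x_int.comp_sub_right s)
    ((gint0_int.comp_sub_right s).const_mul s),
    integral_sub_right_eq_self (fun x : ℝ => x * exp (-x^2/2)) s,
    integral_const_mul, integral_sub_right_eq_self (fun x : ℝ => exp (-x^2/2)) s,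
    gint_x, gint0]
  ring

lemma sqrt2pi_pos : 0 < Real.sqrt (2*π) := Real.sqrt_pos.mpr (by positivity)

lemma sgd_pos (x : ℝ) : 0 < stdGaussianDensity x :=
  div_pos (exp_pos _) sqrt2pi_pos

lemma sgd_nonneg (x : ℝ) : 0 ≤ stdGaussianDensity x := (sgd_pos x).le

lemma sgd_cont : Continuous stdGaussianDensity := by
  unfold stdGaussianDensity
  exact (((continuous_pow 2).neg.div_const 2).rexp).div_const _

lemma sgd_mul_eq (u : ℝ → ℝ) :
    (fun x => u x * stdGaussianDensity x) = fun x => (u x * exp (-x^2/2)) / Real.sqrt (2*π) := by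
  funext x; unfold stdGaussianDensity; ring

lemma sgd_int : Integrable stdGaussianDensity := by
  have := gint0_int.div_const (Real.sqrt (2*π))
  unfold stdGaussianDensity
  exact this

lemma sgd_total : ∫ x, stdGaussianDensity x = 1 := by
  unfold stdGaussianDensity
  rw [integral_div, gint0, div_self sqrt2pi_pos.ne']

lemma sgd_exp_int (s : ℝ) : Integrable fun x => exp (s*x) * stdGaussianDensity x := by
  rw [sgd_mul_eq]
  exact (gint1_int s).div_const _

lemma sgd_exp (s : ℝ) : ∫ x, exp (s*x) * stdGaussianDensity x = exp (s^2/2) := by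
  rw [sgd_mul_eq, integral_div, gint1]
  field_simp

lemma sgd_x_int : Integrable fun x => x * stdGaussianDensity x := by
  rw [sgd_mul_eq]; exact gint_x_int.div_const _

lemma sgd_x : ∫ x, x * stdGaussianDensity x = 0 := by
  rw [sgd_mul_eq, integral_div, gint_x, zero_div]

lemma sgd_sq_int : Integrable fun x => x^2 * stdGaussianDensity x := by
  rw [sgd_mul_eq]; exact gint_sq_int.div_const _

lemma sgd_sq : ∫ x, x^2 * stdGaussianDensity x = 1 := by
  rw [sgd_mul_eq, integral_div, gint_sq, div_self sqrt2pi_pos.ne']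

lemma sgd_x_exp_int (s : ℝ) :
    Integrable fun x => x * (exp (s*x) * stdGaussianDensity x) := by
  have : (fun x => x * (exp (s*x) * stdGaussianDensity x))
      = fun x => (x * (exp (s*x) * exp (-x^2/2))) / Real.sqrt (2*π) := by
    funext x; unfold stdGaussianDensity; ring
  rw [this]; exact (gint_x_exp_int s).div_const _

lemma sgd_x_exp (s : ℝ) :
    ∫ x, x * (exp (s*x) * stdGaussianDensity x) = s * exp (s^2/2) := by
  have : (fun x => x * (exp (s*x) * stdGaussianDensity x))
      = fun x => (x * (exp (s*x) * exp (-x^2/2))) / Real.sqrt (2*π) := by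
    funext x; unfold stdGaussianDensity; ring
  rw [this, integral_div, gint_x_exp, mul_assoc, mul_comm, mul_div_assoc,
    div_self sqrt2pi_pos.ne', mul_one]

lemma integral_cs {f g : ℝ → ℝ} (hf2 : Integrable (fun x => f x^2))
    (hg2 : Integrable (fun x => g x^2)) (hfg : Integrable (fun x => f x * g x)) :
    (∫ x, f x * g x)^2 ≤ (∫ x, f x^2) * ∫ x, g x^2 := by
  set A := ∫ x, f x^2
  set B := ∫ x, g x^2
  set C := ∫ x, f x * g x
  have key : ∀ lam : ℝ, 0 ≤ A * (lam * lam) + (2*C) * lam + B := by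
    intro lam
    have h0 : 0 ≤ ∫ x, (lam * f x + g x)^2 := integral_nonneg fun x => sq_nonneg _
    have hexp : (fun x => (lam * f x + g x)^2)
        = fun x => lam^2 * f x^2 + (2*lam) * (f x * g x) + g x^2 := by
      funext x; ring
    have hI1 : Integrable (fun x => lam^2 * f x^2 + (2*lam) * (f x * g x)) :=
      (hf2.const_mul _).add (hfg.const_mul _)
    rw [hexp, integral_add hI1 hg2, integral_add (hf2.const_mul _) (hfg.const_mul _),
      integral_const_mul, integral_const_mul] at h0
    nlinarith
  have := discrim_le_zero key
  rw [discrim] at this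
  nlinarith


lemma integral_cs_w {w f g : ℝ → ℝ} (hw : ∀ x, 0 ≤ w x)
    (hf2 : Integrable (fun x => f x^2 * w x)) (hg2 : Integrable (fun x => g x^2 * w x))
    (hfg : Integrable (fun x => f x * (g x * w x))) :
    (∫ x, f x * (g x * w x))^2 ≤ (∫ x, f x^2 * w x) * ∫ x, g x^2 * w x := by
  have h1 : (fun x => f x^2 * w x) = fun x => (f x * Real.sqrt (w x))^2 := by
    funext x; rw [mul_pow, Real.sq_sqrt (hw x)]
  have h2 : (fun x => g x^2 * w x) = fun x => (g x * Real.sqrt (w x))^2 := by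
    funext x; rw [mul_pow, Real.sq_sqrt (hw x)]
  have h3 : (fun x => f x * (g x * w x))
      = fun x => (f x * Real.sqrt (w x)) * (g x * Real.sqrt (w x)) := by
    funext x
    have hs : Real.sqrt (w x) ^ 2 = w x := Real.sq_sqrt (hw x)
    linear_combination (-(f x * g x)) * hs
  rw [h1] at hf2
  rw [h2] at hg2
  rw [h3] at hfg
  rw [h3, h1, h2]
  exact integral_cs hf2 hg2 hfg

set_option maxHeartbeats 1000000 in
theorem stmt15 {Ω : Type} [MeasureSpace Ω] [IsProbabilityMeasure (ℙ : Measure Ω)]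
    (Y : Ω → ℝ) (hpdf : HasPDF Y ℙ) (hfin : HasFiniteChiSq Y)
    (hmean : ∫ ω, Y ω = 0) :
    (chiSqDist Y < 1/2 →
      ∀ t : ℝ, t ≠ 0 →
        ∫⁻ ω, ENNReal.ofReal (Real.exp (t * Y ω)) < ENNReal.ofReal (Real.exp (t^2)))
    ∧ (⨅ x : {x : ℝ // 0 < x},
        (Real.exp ((x:ℝ)/2) - 1)^2 / (Real.exp (x:ℝ) - 1 - (x:ℝ))) = 1/2 := by
  refine ⟨?_, aux_inf⟩
  intro hchi t ht
  set p : ℝ → ℝ := fun x => (pdf Y ℙ volume x).toReal with hp_def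
  set h : ℝ → ℝ := fun x => p x / stdGaussianDensity x - 1 with hh_def
  have hfin' : Integrable (fun x => h x^2 * stdGaussianDensity x) := hfin
  have hchi' : (∫ x, h x^2 * stdGaussianDensity x) < 1/2 := hchi
  have hchi0 : (0:ℝ) ≤ ∫ x, h x^2 * stdGaussianDensity x :=
    integral_nonneg fun x => mul_nonneg (sq_nonneg _) (sgd_nonneg x)
  have ht2 : (0:ℝ) < t^2 := by positivity
  set a : ℝ := exp (t^2/2) with ha_def
  have ha1 : 1 < a := by
    have := Real.add_one_lt_exp (show t^2/2 ≠ 0 by positivity)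
    simp only [ha_def]; linarith
  have haA : a^2 = exp (t^2) := aux_exp_sq (t^2)
  have hA1 : 0 < exp (t^2) - 1 - t^2 := by
    have := Real.add_one_lt_exp ht2.ne'
    linarith
  set g : ℝ → ℝ := fun x => exp (t*x) - a - (t*a)*x with hg_def
  have hpmeas : Measurable p := (measurable_pdf Y ℙ volume).ennreal_toReal
  have hpnn : ∀ x, 0 ≤ p x := fun x => ENNReal.toReal_nonneg
  have hhmeas : Measurable h := (hpmeas.div sgd_cont.measurable).sub_const 1
  have hgcont : Continuous g := by
    simp only [hg_def]
    fun_prop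
  have hp_repr : ∀ x, p x = (h x + 1) * stdGaussianDensity x := by
    intro x
    simp only [hh_def]
    rw [sub_add_cancel, div_mul_cancel₀]
    exact (sgd_pos x).ne'
  have hintp : ∫ x, p x = 1 := by
    have h1 : ∫ x, p x = (∫⁻ x, pdf Y ℙ volume x).toReal := by
      simp only [hp_def]
      exact integral_toReal (measurable_pdf Y ℙ volume).aemeasurable pdf.ae_lt_top
    rw [h1, pdf.lintegral_eq_measure_univ, measure_univ, ENNReal.toReal_one]
  have hintxp : ∫ x, x * p x = 0 := by
    simp only [hp_def]
    rw [pdf.integral_mul_eq_integral]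
    exact hmean
  have hpdf_ae : (fun x => ENNReal.ofReal (p x)) =ᵐ[volume] pdf Y ℙ volume := by
    simp only [hp_def]
    exact pdf.ofReal_toReal_ae_eq
  clear_value g a h p
  -- expansion of g^2 * φ and its integral
  have hexp2 : ∀ x : ℝ, exp ((2*t)*x) = exp (t*x)^2 := by
    intro x; rw [← Real.exp_nat_mul]; ring_nf
  have hg2_eq : (fun x => g x^2 * stdGaussianDensity x) = fun x =>
      exp ((2*t)*x) * stdGaussianDensity x
      - (2*a) * (exp (t*x) * stdGaussianDensity x)
      - (2*(t*a)) * (x * (exp (t*x) * stdGaussianDensity x))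
      + (2*(a*(t*a))) * (x * stdGaussianDensity x)
      + (t*a)^2 * (x^2 * stdGaussianDensity x)
      + a^2 * stdGaussianDensity x := by
    funext x
    simp only [hg_def]
    rw [hexp2 x]
    ring
  have i1 := sgd_exp_int (2*t)
  have i2 := (sgd_exp_int t).const_mul (2*a)
  have i3 := (sgd_x_exp_int t).const_mul (2*(t*a))
  have i4 := sgd_x_int.const_mul (2*(a*(t*a)))
  have i5 := sgd_sq_int.const_mul ((t*a)^2)
  have i6 := sgd_int.const_mul (a^2)
  have I5 : Integrable (fun x => exp ((2*t)*x) * stdGaussianDensity x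
      - (2*a) * (exp (t*x) * stdGaussianDensity x)) := i1.sub i2
  have I4 : Integrable (fun x => exp ((2*t)*x) * stdGaussianDensity x
      - (2*a) * (exp (t*x) * stdGaussianDensity x)
      - (2*(t*a)) * (x * (exp (t*x) * stdGaussianDensity x))) := I5.sub i3
  have I3 : Integrable (fun x => exp ((2*t)*x) * stdGaussianDensity x
      - (2*a) * (exp (t*x) * stdGaussianDensity x)
      - (2*(t*a)) * (x * (exp (t*x) * stdGaussianDensity x))
      + (2*(a*(t*a))) * (x * stdGaussianDensity x)) := I4.add i4
  have I2 : Integrable (fun x => exp ((2*t)*x) * stdGaussianDensity x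
      - (2*a) * (exp (t*x) * stdGaussianDensity x)
      - (2*(t*a)) * (x * (exp (t*x) * stdGaussianDensity x))
      + (2*(a*(t*a))) * (x * stdGaussianDensity x)
      + (t*a)^2 * (x^2 * stdGaussianDensity x)) := I3.add i5
  have ig2_int : Integrable (fun x => g x^2 * stdGaussianDensity x) := by
    rw [hg2_eq]; exact I2.add i6
  have ig2_val : ∫ x, g x^2 * stdGaussianDensity x = exp (t^2) * (exp (t^2) - 1 - t^2) := by
    rw [hg2_eq, integral_add I2 i6, integral_add I3 i5, integral_add I4 i4,
      integral_sub I5 i3, integral_sub i1 i2,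
      integral_const_mul, integral_const_mul, integral_const_mul, integral_const_mul,
      integral_const_mul, sgd_exp, sgd_exp, sgd_x_exp, sgd_x, sgd_sq, sgd_total,
      show (2*t)^2/2 = t^2 + t^2 by ring, Real.exp_add, ← ha_def]
    linear_combination (-(1+t^2)) * haA
  -- integrabilities involving h and p
  have i_hphi : Integrable (fun x => h x * stdGaussianDensity x) := by
    refine Integrable.mono' ((hfin'.add sgd_int).div_const 2)
      ((hhmeas.mul sgd_cont.measurable).aestronglyMeasurable) (ae_of_all _ fun x => ?_)
    rw [Real.norm_eq_abs, abs_mul, abs_of_nonneg (sgd_nonneg x)]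
    have hb : |h x| ≤ (h x^2 + 1)/2 := by
      nlinarith [sq_nonneg (|h x| - 1), sq_abs (h x)]
    calc |h x| * stdGaussianDensity x
        ≤ ((h x^2 + 1)/2) * stdGaussianDensity x :=
          mul_le_mul_of_nonneg_right hb (sgd_nonneg x)
      _ = (h x^2 * stdGaussianDensity x + stdGaussianDensity x)/2 := by ring
  have i_xhphi : Integrable (fun x => x * (h x * stdGaussianDensity x)) := by
    refine Integrable.mono' ((sgd_sq_int.add hfin').div_const 2)
      ((measurable_id.mul (hhmeas.mul sgd_cont.measurable)).aestronglyMeasurable)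
      (ae_of_all _ fun x => ?_)
    rw [Real.norm_eq_abs, abs_mul, abs_mul, abs_of_nonneg (sgd_nonneg x)]
    have hb : |x| * |h x| ≤ (x^2 + h x^2)/2 := by
      nlinarith [sq_nonneg (|x| - |h x|), sq_abs (h x), sq_abs x]
    calc |x| * (|h x| * stdGaussianDensity x)
        = (|x| * |h x|) * stdGaussianDensity x := by ring
      _ ≤ ((x^2 + h x^2)/2) * stdGaussianDensity x :=
          mul_le_mul_of_nonneg_right hb (sgd_nonneg x)
      _ = (x^2 * stdGaussianDensity x + h x^2 * stdGaussianDensity x)/2 := by ring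
  have i_ghphi : Integrable (fun x => g x * (h x * stdGaussianDensity x)) := by
    refine Integrable.mono' ((ig2_int.add hfin').div_const 2)
      ((hgcont.measurable.mul (hhmeas.mul sgd_cont.measurable)).aestronglyMeasurable)
      (ae_of_all _ fun x => ?_)
    rw [Real.norm_eq_abs, abs_mul, abs_mul, abs_of_nonneg (sgd_nonneg x)]
    have hb : |g x| * |h x| ≤ (g x^2 + h x^2)/2 := by
      nlinarith [sq_nonneg (|g x| - |h x|), sq_abs (h x), sq_abs (g x)]
    calc |g x| * (|h x| * stdGaussianDensity x)
        = (|g x| * |h x|) * stdGaussianDensity x := by ring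
      _ ≤ ((g x^2 + h x^2)/2) * stdGaussianDensity x :=
          mul_le_mul_of_nonneg_right hb (sgd_nonneg x)
      _ = (g x^2 * stdGaussianDensity x + h x^2 * stdGaussianDensity x)/2 := by ring
  have i_gphi : Integrable (fun x => g x * stdGaussianDensity x) := by
    have e : (fun x => g x * stdGaussianDensity x) = fun x =>
        exp (t*x) * stdGaussianDensity x - a * stdGaussianDensity x
        - (t*a) * (x * stdGaussianDensity x) := by
      funext x; simp only [hg_def]; ring
    rw [e]
    exact ((sgd_exp_int t).sub (sgd_int.const_mul a)).sub (sgd_x_int.const_mul (t*a))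
  have val_gphi : ∫ x, g x * stdGaussianDensity x = 0 := by
    have e : (fun x => g x * stdGaussianDensity x) = fun x =>
        exp (t*x) * stdGaussianDensity x - a * stdGaussianDensity x
        - (t*a) * (x * stdGaussianDensity x) := by
      funext x; simp only [hg_def]; ring
    have J1 : Integrable (fun x => exp (t*x) * stdGaussianDensity x
        - a * stdGaussianDensity x) := (sgd_exp_int t).sub (sgd_int.const_mul a)
    rw [e, integral_sub J1 (sgd_x_int.const_mul (t*a)),
      integral_sub (sgd_exp_int t) (sgd_int.const_mul a),
      integral_const_mul, integral_const_mul, sgd_exp, sgd_x, sgd_total, ← ha_def]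
    ring
  have i_p_aux : Integrable (fun x => h x * stdGaussianDensity x + stdGaussianDensity x) :=
    i_hphi.add sgd_int
  have i_p : Integrable p :=
    i_p_aux.congr (ae_of_all _ fun x => by simp only [hp_repr]; ring)
  have i_xp_aux : Integrable (fun x => x * (h x * stdGaussianDensity x)
      + x * stdGaussianDensity x) := i_xhphi.add sgd_x_int
  have i_xp : Integrable (fun x => x * p x) :=
    i_xp_aux.congr (ae_of_all _ fun x => by simp only [hp_repr]; ring)
  have i_gp_aux : Integrable (fun x => g x * (h x * stdGaussianDensity x)
      + g x * stdGaussianDensity x) := i_ghphi.add i_gphi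
  have i_gp : Integrable (fun x => g x * p x) :=
    i_gp_aux.congr (ae_of_all _ fun x => by simp only [hp_repr]; ring)
  have val_gp : ∫ x, g x * p x = ∫ x, g x * (h x * stdGaussianDensity x) := by
    have e : ∀ x, g x * p x = g x * (h x * stdGaussianDensity x)
        + g x * stdGaussianDensity x := fun x => by rw [hp_repr x]; ring
    rw [integral_congr_ae (ae_of_all _ e), integral_add i_ghphi i_gphi, val_gphi, add_zero]
  have hq_aux1 : Integrable (fun x => g x * p x + a * p x) := i_gp.add (i_p.const_mul a)
  have hq_aux2 : Integrable (fun x => g x * p x + a * p x + (t*a) * (x * p x)) :=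
    hq_aux1.add (i_xp.const_mul (t*a))
  have hq_int : Integrable (fun x => exp (t*x) * p x) := by
    refine hq_aux2.congr (ae_of_all _ fun x => ?_)
    simp only [hg_def]; ring
  have hq_val : ∫ x, exp (t*x) * p x
      = (∫ x, g x * (h x * stdGaussianDensity x)) + a := by
    have e : ∀ x, exp (t*x) * p x = g x * p x + a * p x + (t*a) * (x * p x) := fun x => by
      simp only [hg_def]; ring
    rw [integral_congr_ae (ae_of_all _ e),
      integral_add hq_aux1 (i_xp.const_mul (t*a)),
      integral_add i_gp (i_p.const_mul a),
      integral_const_mul, integral_const_mul, hintp, hintxp, val_gp]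
    ring
  -- Cauchy–Schwarz and the final bound
  have hcs := integral_cs_w sgd_nonneg ig2_int hfin' i_ghphi
  rw [ig2_val] at hcs
  have hkey : exp (t^2) - 1 - t^2 ≤ 2 * (a - 1)^2 := by
    have := aux_key ht2.le
    rwa [← ha_def] at this
  have haa0 : 0 ≤ a * (a - 1) := by nlinarith
  have hC_lt : (∫ x, g x * (h x * stdGaussianDensity x)) < a * (a - 1) := by
    refine lt_of_pow_lt_pow_left₀ 2 haa0 ?_
    calc (∫ x, g x * (h x * stdGaussianDensity x))^2
        ≤ (exp (t^2) * (exp (t^2) - 1 - t^2)) * ∫ x, h x^2 * stdGaussianDensity x := hcs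
      _ < (exp (t^2) * (exp (t^2) - 1 - t^2)) * (1/2) :=
          mul_lt_mul_of_pos_left hchi' (mul_pos (exp_pos _) hA1)
      _ ≤ (a * (a - 1))^2 := by nlinarith [exp_pos (t^2), haA, hkey]
  have hfinal : ∫ x, exp (t*x) * p x < exp (t^2) := by
    rw [hq_val, ← haA]
    have hr : a * (a - 1) + a = a^2 := by ring
    linarith [hC_lt]
  -- pass to the lintegral
  have hfm : Measurable (fun x : ℝ => ENNReal.ofReal (exp (t*x))) :=
    ENNReal.measurable_ofReal.comp (Real.measurable_exp.comp (measurable_const.mul measurable_id))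
  calc ∫⁻ ω, ENNReal.ofReal (exp (t * Y ω))
      = ∫⁻ x, pdf Y ℙ volume x * ENNReal.ofReal (exp (t*x)) :=
        (pdf.lintegral_pdf_mul hfm.aemeasurable).symm
    _ = ∫⁻ x, ENNReal.ofReal (exp (t*x) * p x) := by
        apply lintegral_congr_ae
        filter_upwards [hpdf_ae] with x hx
        rw [← hx, ← ENNReal.ofReal_mul (hpnn x), mul_comm]
    _ = ENNReal.ofReal (∫ x, exp (t*x) * p x) :=
        (MeasureTheory.ofReal_integral_eq_lintegral_ofReal hq_int
          (ae_of_all _ fun x => mul_nonneg (exp_pos _).le (hpnn x))).symm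
    _ < ENNReal.ofReal (exp (t^2)) :=
        (ENNReal.ofReal_lt_ofReal_iff (exp_pos _)).mpr hfinal
end

section
/- For every set J of positive integers, every integer s ≥ 1, and every 0 < p < 1: h_J(s,p) ≤ h⁰_J(s,p). -/
open Real
open scoped Classical

/-- `h⁰_J(s,p) = ((1−p)^s/p²)·(p²/(1−p)^{s+1} + (p/s)/(1−p)^s − Σ_{k∈J} k·(k+s−2)!/((k−1)!·s!)·p^k)`. -/
noncomputable def h0J (J : Set ℕ) (s : ℕ) (p : ℝ) : ℝ :=
  ((1-p)^s / p^2) *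
    (p^2 / (1-p)^(s+1) + (p/(s:ℝ)) * (1 / (1-p)^s)
      - ∑' k : ℕ, if k ∈ J then
          (k:ℝ) * ((Nat.factorial (k+s-2) : ℝ) / ((Nat.factorial (k-1) : ℝ) * (Nat.factorial s : ℝ))) * p^k
        else 0)

lemma fact_pos' (n : ℕ) : (0:ℝ) < (Nat.factorial n : ℝ) := by
  exact_mod_cast Nat.factorial_pos n

lemma term_le_aux (t : ℕ) (p : ℝ) (hp : 0 < p) (k : ℕ) (hk : 1 ≤ k) :
    ((k:ℝ)^2 / ((k:ℝ) + ((t:ℝ)+1))^2) * ((k+(t+1)).choose k : ℝ) * p^k ≤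
    (k:ℝ) * ((Nat.factorial (k+(t+1)-2) : ℝ) / ((Nat.factorial (k-1) : ℝ) * (Nat.factorial (t+1) : ℝ))) * p^k := by
  obtain ⟨m, rfl⟩ : ∃ m, k = m + 1 := ⟨k - 1, by omega⟩
  have hpk : (0:ℝ) ≤ p ^ (m+1) := le_of_lt (pow_pos hp _)
  apply mul_le_mul_of_nonneg_right _ hpk
  have e1 : (m + 1) + (t+1) - 2 = m + t := by omega
  have e2 : (m + 1) - 1 = m := by omega
  rw [e1, e2]
  have hch : (((m+1)+(t+1)).choose (m+1) : ℝ)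
      = (Nat.factorial (m+t+2) : ℝ) / ((Nat.factorial (m+1) : ℝ) * (Nat.factorial (t+1) : ℝ)) := by
    rw [show (m+1)+(t+1) = m+t+2 from by omega,
      Nat.cast_choose ℝ (by omega : (m+1) ≤ m+t+2),
      show m+t+2-(m+1) = t+1 from by omega]
  rw [hch]
  have hf2 : (Nat.factorial (m+t+2) : ℝ) = ((m:ℝ)+(t:ℝ)+2) * ((m:ℝ)+(t:ℝ)+1) * (Nat.factorial (m+t) : ℝ) := by
    have : m + t + 2 = (m+t+1) + 1 := by omega
    rw [this, Nat.factorial_succ, Nat.factorial_succ]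
    push_cast; ring
  have hf1 : (Nat.factorial (m+1) : ℝ) = ((m:ℝ)+1) * (Nat.factorial m : ℝ) := by
    rw [Nat.factorial_succ]; push_cast; ring
  have hR0 : (0:ℝ) ≤ ((m:ℝ)+1) * ((Nat.factorial (m+t) : ℝ) / ((Nat.factorial m : ℝ) * (Nat.factorial (t+1) : ℝ))) := by
    positivity
  have key : (((m+1):ℕ):ℝ)^2 / ((((m+1):ℕ):ℝ) + ((t:ℝ)+1))^2
        * ((Nat.factorial (m+t+2) : ℝ) / ((Nat.factorial (m+1) : ℝ) * (Nat.factorial (t+1) : ℝ)))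
      = (((m:ℝ)+1) * ((Nat.factorial (m+t) : ℝ) / ((Nat.factorial m : ℝ) * (Nat.factorial (t+1) : ℝ))))
        * (((m:ℝ)+(t:ℝ)+1) / ((m:ℝ)+(t:ℝ)+2)) := by
    rw [hf2, hf1]
    have h1 : (Nat.factorial m : ℝ) ≠ 0 := ne_of_gt (fact_pos' m)
    have h2 : (Nat.factorial (t+1) : ℝ) ≠ 0 := ne_of_gt (fact_pos' (t+1))
    have h3 : ((m:ℝ)+(t:ℝ)+2) ≠ 0 := by positivity
    have h4 : ((m:ℝ)+1) ≠ 0 := by positivity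
    have h5 : ((((m+1):ℕ):ℝ) + ((t:ℝ)+1)) = ((m:ℝ)+(t:ℝ)+2) := by push_cast; ring
    rw [h5]
    field_simp
    push_cast; ring
  rw [key]
  calc (((m:ℝ)+1) * ((Nat.factorial (m+t) : ℝ) / ((Nat.factorial m : ℝ) * (Nat.factorial (t+1) : ℝ))))
        * (((m:ℝ)+(t:ℝ)+1) / ((m:ℝ)+(t:ℝ)+2))
      ≤ (((m:ℝ)+1) * ((Nat.factorial (m+t) : ℝ) / ((Nat.factorial m : ℝ) * (Nat.factorial (t+1) : ℝ)))) * 1 := by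
        apply mul_le_mul_of_nonneg_left _ hR0
        rw [div_le_one (by positivity)]
        linarith
    _ = (((m+1):ℕ):ℝ) * ((Nat.factorial (m+t) : ℝ) / ((Nat.factorial m : ℝ) * (Nat.factorial (t+1) : ℝ))) := by
        push_cast; ring

theorem stmt18 (J : Set ℕ) (hJpos : ∀ k ∈ J, 1 ≤ k)
    (s : ℕ) (hs : 1 ≤ s) (p : ℝ) (hp : 0 < p) (hp1 : p < 1) :
    hJfun J s p ≤ h0J J s p := by
  obtain ⟨t, rfl⟩ : ∃ t, s = t + 1 := ⟨s - 1, by omega⟩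
  have hp' : ‖p‖ < 1 := by rw [Real.norm_eq_abs, abs_of_pos hp]; exact hp1
  have h1p : (0:ℝ) < 1 - p := by linarith
  -- the dominating sequence
  set bb : ℕ → ℝ := fun k =>
    (k:ℝ) * ((Nat.factorial (k+(t+1)-2) : ℝ) / ((Nat.factorial (k-1) : ℝ) * (Nat.factorial (t+1) : ℝ))) * p^k
    with hbb
  have H1 : HasSum (fun n : ℕ => ((n+t).choose t : ℝ) * p ^ n) (1 / (1 - p) ^ (t + 1)) :=
    hasSum_choose_mul_geometric_of_norm_lt_one t hp'
  have H2 : HasSum (fun n : ℕ => ((n+(t+1)).choose (t+1) : ℝ) * p ^ n) (1 / (1 - p) ^ (t + 2)) :=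
    hasSum_choose_mul_geometric_of_norm_lt_one (t+1) hp'
  -- H3' : sum of n * C(n+t,t) * p^n
  have H3 : HasSum (fun n : ℕ => (n:ℝ) * ((n+t).choose t : ℝ) * p ^ n)
      (((t:ℝ)+1) * (1 / (1 - p) ^ (t + 2)) - ((t:ℝ)+1) * (1 / (1 - p) ^ (t + 1))) := by
    have := (H2.mul_left ((t:ℝ)+1)).sub (H1.mul_left ((t:ℝ)+1))
    convert this using 3 with n
    · rfl
    have hid : (n + t + 1) * (n + t).choose t = ((n + t + 1).choose (t + 1)) * (t + 1) :=
      Nat.add_one_mul_choose_eq (n + t) t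
    have hid' : ((n:ℝ) + (t:ℝ) + 1) * ((n+t).choose t : ℝ) = (((n + t + 1).choose (t + 1)) : ℝ) * ((t:ℝ) + 1) := by
      exact_mod_cast hid
    have e : n + (t+1) = n + t + 1 := by omega
    rw [e]
    have h2' : ((t:ℝ)+1) * ((((n + t + 1).choose (t + 1)):ℝ) * p ^ n)
        = (((n:ℝ) + (t:ℝ) + 1) * ((n+t).choose t : ℝ)) * p^n := by
      rw [mul_comm ((t:ℝ)+1), mul_assoc, mul_comm (p^n), ← mul_assoc, hid']
    rw [h2']
    ring
  have H4 : HasSum (fun n : ℕ => ((n:ℝ)+1) * ((n+t).choose t : ℝ) * p ^ n)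
      ((((t:ℝ)+1) * (1 / (1 - p) ^ (t + 2)) - ((t:ℝ)+1) * (1 / (1 - p) ^ (t + 1))) + 1 / (1 - p) ^ (t + 1)) := by
    convert H3.add H1 using 2 with n
    ring
  -- shifted bb
  have Hshift : HasSum (fun n : ℕ => bb (n+1))
      ((p/((t:ℝ)+1)) * ((((t:ℝ)+1) * (1 / (1 - p) ^ (t + 2)) - ((t:ℝ)+1) * (1 / (1 - p) ^ (t + 1))) + 1 / (1 - p) ^ (t + 1))) := by
    convert H4.mul_left (p/((t:ℝ)+1)) using 2 with n
    · rfl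
    have e1 : (n + 1) + (t+1) - 2 = n + t := by omega
    have e2 : (n + 1) - 1 = n := by omega
    rw [hbb]
    simp only [e1, e2]
    have hch : ((n+t).choose t : ℝ)
        = (Nat.factorial (n+t) : ℝ) / ((Nat.factorial t : ℝ) * (Nat.factorial n : ℝ)) := by
      rw [Nat.cast_choose ℝ (by omega : t ≤ n + t), Nat.add_sub_cancel]
    rw [hch, Nat.factorial_succ (t)]
    have h1 : (Nat.factorial n : ℝ) ≠ 0 := ne_of_gt (fact_pos' n)
    have h2 : (Nat.factorial t : ℝ) ≠ 0 := ne_of_gt (fact_pos' t)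
    have h3 : ((t:ℝ)+1) ≠ 0 := by positivity
    push_cast
    field_simp
    ring
  have hbb0 : bb 0 = 0 := by simp [hbb]
  have Hbb : HasSum bb
      ((p/((t:ℝ)+1)) * ((((t:ℝ)+1) * (1 / (1 - p) ^ (t + 2)) - ((t:ℝ)+1) * (1 / (1 - p) ^ (t + 1))) + 1 / (1 - p) ^ (t + 1))) := by
    refine (hasSum_nat_add_iff' 1).mp ?_
    simpa [hbb0] using Hshift
  -- target value T equals the closed form in h0J
  have hT : ((p/((t:ℝ)+1)) * ((((t:ℝ)+1) * (1 / (1 - p) ^ (t + 2)) - ((t:ℝ)+1) * (1 / (1 - p) ^ (t + 1))) + 1 / (1 - p) ^ (t + 1)))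
      = p^2 / (1-p)^(t+1+1) + (p/(((t+1):ℕ):ℝ)) * (1 / (1-p)^(t+1)) := by
    have h3 : ((t:ℝ)+1) ≠ 0 := by positivity
    have h4 : (1-p) ≠ 0 := ne_of_gt h1p
    push_cast
    rw [show t+1+1 = t+2 from rfl]
    field_simp
    ring
  rw [hT] at Hbb
  -- nonnegativity of bb
  have hbbnn : ∀ k, 0 ≤ bb k := by
    intro k
    rw [hbb]
    have := fact_pos' (k+(t+1)-2)
    have := fact_pos' (k-1)
    have := fact_pos' (t+1)
    positivity
  -- the two indicator functions
  set fA : ℕ → ℝ := fun k =>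
    if 1 ≤ k ∧ k ∉ J then ((k:ℝ)^2 / ((k:ℝ) + (((t+1):ℕ):ℝ))^2) * (Nat.choose (k+(t+1)) k : ℝ) * p^k else 0
    with hfA
  set fB : ℕ → ℝ := fun k =>
    if k ∈ J then (k:ℝ) * ((Nat.factorial (k+(t+1)-2) : ℝ) / ((Nat.factorial (k-1) : ℝ) * (Nat.factorial (t+1) : ℝ))) * p^k else 0
    with hfB
  have hfAle : ∀ k, fA k ≤ bb k := by
    intro k
    rw [hfA]
    by_cases h : 1 ≤ k ∧ k ∉ J
    · simp only [h, if_true]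
      have h5 : ((((t+1):ℕ)):ℝ) = (t:ℝ)+1 := by push_cast; ring
      rw [h5]
      exact term_le_aux t p hp k h.1
    · simp only [h, if_false]
      exact hbbnn k
  have hfAnn : ∀ k, 0 ≤ fA k := by
    intro k
    rw [hfA]
    by_cases h : 1 ≤ k ∧ k ∉ J
    · simp only [h, if_true]; positivity
    · simp [h]
  have hfBle : ∀ k, fB k ≤ bb k := by
    intro k
    rw [hfB]
    by_cases h : k ∈ J
    · simp [h, hbb]
    · simp only [h, if_false]; exact hbbnn k
  have hfBnn : ∀ k, 0 ≤ fB k := by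
    intro k
    rw [hfB]
    by_cases h : k ∈ J
    · simp only [h, if_true]
      have := fact_pos' (k+(t+1)-2)
      have := fact_pos' (k-1)
      have := fact_pos' (t+1)
      positivity
    · simp [h]
  have hsA : Summable fA := Summable.of_nonneg_of_le hfAnn hfAle Hbb.summable
  have hsB : Summable fB := Summable.of_nonneg_of_le hfBnn hfBle Hbb.summable
  have hsum_le : (∑' k, fA k) + (∑' k, fB k) ≤ p^2 / (1-p)^(t+1+1) + (p/(((t+1):ℕ):ℝ)) * (1 / (1-p)^(t+1)) := by
    rw [← Summable.tsum_add hsA hsB, ← Hbb.tsum_eq]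
    apply Summable.tsum_le_tsum _ (hsA.add hsB) Hbb.summable
    intro k
    by_cases hkJ : k ∈ J
    · have h1 : ¬ (1 ≤ k ∧ k ∉ J) := by tauto
      simp only [hfA, hfB, h1, hkJ, if_true, if_false]
      simp [hbb]
    · have hB0 : fB k = 0 := by simp only [hfB]; simp [hkJ]
      rw [hB0, add_zero]
      exact hfAle k
  -- conclude
  rw [hJfun, h0J]
  have hC : 0 ≤ (1-p)^(t+1) / p^2 := by positivity
  apply mul_le_mul_of_nonneg_left _ hC
  linarith [hsum_le]
end
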